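/- arXiv:1902.04760 — 7 statements merged into one kernel-verified Lean document; each statement's English description precedes it below -/
import Mathlib

section
/- Let z ∈ ℝⁿ be a random vector with i.i.d. N(0, v²) entries and let D ∈ ℝ^{m×n} be a fixed matrix. Then for any constant vector b ∈ ℝᵐ in the range of D, the conditional distribution of z given Dz = b equals the distribution of D⁺b + Π z̃, where D⁺ is the Moore–Penrose pseudoinverse of D, Π is the orthogonal projection onto the null space of D, and z̃ is an independent random vector with i.i.d. N(0, v²) entries. -/
/-!
`P = D⁺D` is the orthogonal projection onto the row space of `D`, so `D P = D` and
`D (1 - P) = 0`. If `z` and `w` are independent iid `N(0, v²)` vectors, then so is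
`P z + (1 - P) w`: its characteristic function at `t` is
`exp (-v² (‖Pᵀ t‖² + ‖(1 - P)ᵀ t‖²) / 2) = exp (-v² ‖t‖² / 2)` because
`P Pᵀ + (1 - P) (1 - P)ᵀ = 1`. Substituting `P z + (1 - P) w` for `z` leaves `D z` unchanged,
and integrating out `w` by Fubini gives the claim.
-/

open MeasureTheory ProbabilityTheory Matrix

/-- `B` is the Moore–Penrose pseudoinverse of `A`. -/
def IsMoorePenrose {n m : Type*} [Fintype n] [Fintype m]
    (A : Matrix n m ℝ) (B : Matrix m n ℝ) : Prop :=
  A * B * A = A ∧ B * A * B = B ∧ (A * B)ᵀ = A * B ∧ (B * A)ᵀ = B * A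

open scoped NNReal

theorem MeasureTheory.MeasurePreserving.integral_mul_eq_integral_integral_mul
    {α β : Type*} [MeasurableSpace α] [MeasurableSpace β] {μ : Measure α} {ν : Measure β}
    [SFinite μ] [SFinite ν] {T : α × β → α} (hT : MeasurePreserving T (μ.prod ν) μ)
    {φ ψ : α → ℝ} (hφ : Integrable φ μ) (hψ : AEStronglyMeasurable ψ μ) {C : ℝ}
    (hψC : ∀ z, ‖ψ z‖ ≤ C) (hψT : ∀ z w, ψ (T (z, w)) = ψ z) :
    ∫ z, φ z * ψ z ∂μ = ∫ z, (∫ w, φ (T (z, w)) ∂ν) * ψ z ∂μ := by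
  have hφψ : Integrable (fun z => φ z * ψ z) μ := hφ.mul_bdd hψ (ae_of_all _ hψC)
  calc ∫ z, φ z * ψ z ∂μ = ∫ z, φ z * ψ z ∂(μ.prod ν).map T := by rw [hT.map_eq]
    _ = ∫ p, φ (T p) * ψ (T p) ∂(μ.prod ν) :=
        integral_map hT.measurable.aemeasurable (by rw [hT.map_eq]; exact hφψ.aestronglyMeasurable)
    _ = ∫ z, ∫ w, φ (T (z, w)) * ψ z ∂ν ∂μ := by
        rw [integral_prod (fun p => φ (T p) * ψ (T p)) (hT.integrable_comp_of_integrable hφψ)]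
        simp_rw [hψT]
    _ = ∫ z, (∫ w, φ (T (z, w)) ∂ν) * ψ z ∂μ := by
        simp_rw [integral_mul_const]

section LinearAlgebra

variable {ι κ R : Type*} [Fintype ι] [Fintype κ]

lemma LinearMap.apply_eq_dotProduct [CommSemiring R] [DecidableEq ι] (L : (ι → R) →ₗ[R] R)
    (x : ι → R) : L x = (fun j => L (Pi.single j 1)) ⬝ᵥ x := by
  simpa [dotProduct, mul_comm] using congrArg L (pi_eq_sum_univ' x)

lemma Matrix.vecMul_dotProduct_vecMul_self [CommSemiring R] (c : ι → R) (A : Matrix ι κ R) :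
    (c ᵥ* A) ⬝ᵥ (c ᵥ* A) = c ⬝ᵥ (A * Aᵀ) *ᵥ c := by
  rw [← mulVec_mulVec, dotProduct_mulVec, mulVec_transpose]

lemma Matrix.mul_transpose_add_one_sub_mul_transpose [Ring R] [DecidableEq ι]
    {P : Matrix ι ι R} (hP : P * P = P) (hPt : Pᵀ = P) : P * Pᵀ + (1 - P) * (1 - P)ᵀ = 1 := by
  rw [transpose_sub, transpose_one, hPt, sub_mul, mul_sub, mul_sub, hP]
  simp

end LinearAlgebra

section IidGaussian

variable {ι κ κ' : Type*} [Fintype ι] [Fintype κ] [Fintype κ'] [DecidableEq κ] [DecidableEq κ']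

lemma charFunDual_pi_gaussianReal (V : ℝ≥0) {L : StrongDual ℝ (κ → ℝ)} {c : κ → ℝ}
    (hL : ∀ x, L x = c ⬝ᵥ x) :
    charFunDual (Measure.pi fun _ : κ => gaussianReal 0 V) L
      = Complex.exp (-(V * (c ⬝ᵥ c)) / 2) := by
  have hcoord : ∀ i, charFunDual (gaussianReal 0 V) (L.comp (.single ℝ (fun _ => ℝ) i))
      = Complex.exp (-(V * (c i * c i)) / 2) := by
    intro i
    have hLi : ∀ x : ℝ, L.comp (.single ℝ (fun _ => ℝ) i) x = c i * x := fun x => by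
      simp [hL]
    simp_rw [charFunDual_apply, hLi, Complex.ofReal_mul, ← charFun_apply_real,
      charFun_gaussianReal]
    congr 1
    push_cast
    ring
  rw [charFunDual_pi]
  simp_rw [hcoord, ← Complex.exp_sum]
  rw [← Finset.sum_div, Finset.sum_neg_distrib, ← Finset.mul_sum, dotProduct]
  push_cast
  rfl

lemma measurePreserving_mulVec_add_mulVec_prod_pi_gaussianReal [DecidableEq ι] (V : ℝ≥0)
    {A : Matrix ι κ ℝ} {B : Matrix ι κ' ℝ} (hAB : A * Aᵀ + B * Bᵀ = 1) :
    MeasurePreserving (fun p => A *ᵥ p.1 + B *ᵥ p.2)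
      ((Measure.pi fun _ : κ => gaussianReal 0 V).prod (Measure.pi fun _ : κ' => gaussianReal 0 V))
      (Measure.pi fun _ : ι => gaussianReal 0 V) := by
  let T : (κ → ℝ) × (κ' → ℝ) →L[ℝ] (ι → ℝ) :=
    A.mulVecLin.toContinuousLinearMap.coprod B.mulVecLin.toContinuousLinearMap
  refine ⟨T.continuous.measurable, Measure.ext_of_charFunDual (funext fun L => ?_)⟩
  set c := fun j => L (Pi.single j 1)
  have hL : ∀ x, L x = c ⬝ᵥ x := L.toLinearMap.apply_eq_dotProduct
  have hLA : ∀ x, (L.comp T).comp (.inl ℝ _ _) x = (c ᵥ* A) ⬝ᵥ x := fun x => by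
    simp [T, hL, dotProduct_mulVec]
  have hLB : ∀ x, (L.comp T).comp (.inr ℝ _ _) x = (c ᵥ* B) ⬝ᵥ x := fun x => by
    simp [T, hL, dotProduct_mulVec]
  have hc : c ⬝ᵥ (A * Aᵀ) *ᵥ c + c ⬝ᵥ (B * Bᵀ) *ᵥ c = c ⬝ᵥ c := by
    rw [← dotProduct_add, ← add_mulVec, hAB, one_mulVec]
  change charFunDual (Measure.map T _) L = _
  rw [charFunDual_map, charFunDual_prod, charFunDual_pi_gaussianReal V hLA,
    charFunDual_pi_gaussianReal V hLB, charFunDual_pi_gaussianReal V hL, ← Complex.exp_add,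
    vecMul_dotProduct_vecMul_self, vecMul_dotProduct_vecMul_self, ← hc]
  push_cast
  ring_nf

end IidGaussian

/-- Conditioning a standard iid Gaussian vector on a linear constraint `D z = b`:
the conditional law of `z` given `D z = b` is that of `D⁺ b + Π z̃`, where `Π = I - D⁺ D`
is the orthogonal projection onto the null space of `D` and `z̃` is a fresh iid Gaussian.
Stated in kernel form: for every integrable `φ` and bounded measurable function `g` of `Dz`,
the expectations agree (here `b = D z` ranges over the range of `D`). -/
theorem gaussian_conditioning_linear_constraint
    {n m : ℕ} (v : NNReal) (D : Matrix (Fin m) (Fin n) ℝ)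
    (Dp : Matrix (Fin n) (Fin m) ℝ) (hDp : IsMoorePenrose D Dp)
    (μ : Measure (Fin n → ℝ))
    (hμ : μ = Measure.pi (fun _ : Fin n => gaussianReal 0 (v ^ 2)))
    (φ : (Fin n → ℝ) → ℝ) (hφ : Integrable φ μ)
    (g : (Fin m → ℝ) → ℝ) (hg : Measurable g) (hgb : ∃ M, ∀ y, |g y| ≤ M) :
    ∫ z, φ z * g (D.mulVec z) ∂μ
      = ∫ z, (∫ w, φ (Dp.mulVec (D.mulVec z) + (1 - Dp * D).mulVec w) ∂μ)
          * g (D.mulVec z) ∂μ := by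
  obtain ⟨hDDpD, hDpDDp, -, hDpD⟩ := hDp
  obtain ⟨M, hM⟩ := hgb
  subst hμ
  have hP : Dp * D * (Dp * D) = Dp * D := by rw [← Matrix.mul_assoc, hDpDDp]
  have hDP : D * (Dp * D) = D := by rw [← Matrix.mul_assoc, hDDpD]
  have hDQ : D * (1 - Dp * D) = 0 := by rw [Matrix.mul_sub, Matrix.mul_one, hDP, sub_self]
  have hT := measurePreserving_mulVec_add_mulVec_prod_pi_gaussianReal (v ^ 2)
    (mul_transpose_add_one_sub_mul_transpose hP hDpD)
  simp_rw [mulVec_mulVec]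
  refine hT.integral_mul_eq_integral_integral_mul hφ (hg.comp (by fun_prop)).aestronglyMeasurable
    (fun z => hM (D *ᵥ z)) fun z w => ?_
  simp [mulVec_add, mulVec_mulVec, hDP, hDQ]
end

section
/- Let A ∈ ℝ^{n×m}, Q ∈ ℝ^{m×q}, Y ∈ ℝ^{n×q}, P ∈ ℝ^{n×p}, X ∈ ℝ^{m×p} with Y = A₀Q and X = A₀ᵀP solvable for some A₀. Then E = YQ⁺ + P^{+ᵀ}Xᵀ − P^{+ᵀ}PᵀYQ⁺ satisfies EQ = Y and PᵀE = Xᵀ, and E is the unique minimizer of the Frobenius norm ‖A‖_F among all matrices A with AQ = Y and PᵀA = Xᵀ. -/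
open Matrix

/-- Squared Frobenius norm of a matrix. -/
def frobSq {n m : Type*} [Fintype n] [Fintype m] (A : Matrix n m ℝ) : ℝ :=
  ∑ i, ∑ j, (A i j) ^ 2

lemma frobSq_eq_trace {n m : ℕ} (A : Matrix (Fin n) (Fin m) ℝ) :
    frobSq A = Matrix.trace (Aᵀ * A) := by
  unfold frobSq Matrix.trace
  simp only [Matrix.diag_apply, Matrix.mul_apply, Matrix.transpose_apply, sq]
  rw [Finset.sum_comm]

lemma frobSq_nonneg {n m : ℕ} (A : Matrix (Fin n) (Fin m) ℝ) : 0 ≤ frobSq A := by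
  unfold frobSq
  positivity

lemma frobSq_eq_zero {n m : ℕ} {A : Matrix (Fin n) (Fin m) ℝ} (h : frobSq A = 0) : A = 0 := by
  ext i j
  have h1 := (Finset.sum_eq_zero_iff_of_nonneg (fun i _ => by positivity)).mp h i
    (Finset.mem_univ i)
  have h2 := (Finset.sum_eq_zero_iff_of_nonneg (fun j _ => by positivity)).mp h1 j
    (Finset.mem_univ j)
  have := pow_eq_zero_iff (n := 2) (by norm_num) |>.mp h2
  simpa using this

/-- `E = Y Q⁺ + P⁺ᵀ Xᵀ − P⁺ᵀ Pᵀ Y Q⁺` solves `E Q = Y`, `Pᵀ E = Xᵀ`, and is the unique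
minimizer of the Frobenius norm among solutions of these equations. -/
theorem conditioning_mean_is_min_frobenius_solution
    {n m q p : ℕ}
    (Q : Matrix (Fin m) (Fin q) ℝ) (Y : Matrix (Fin n) (Fin q) ℝ)
    (P : Matrix (Fin n) (Fin p) ℝ) (X : Matrix (Fin m) (Fin p) ℝ)
    (Qp : Matrix (Fin q) (Fin m) ℝ) (hQp : IsMoorePenrose Q Qp)
    (Pp : Matrix (Fin p) (Fin n) ℝ) (hPp : IsMoorePenrose P Pp)
    (A₀ : Matrix (Fin n) (Fin m) ℝ) (hY : Y = A₀ * Q) (hX : X = A₀ᵀ * P) :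
    (Y * Qp + Ppᵀ * Xᵀ - Ppᵀ * Pᵀ * Y * Qp) * Q = Y ∧
    Pᵀ * (Y * Qp + Ppᵀ * Xᵀ - Ppᵀ * Pᵀ * Y * Qp) = Xᵀ ∧
    (∀ A : Matrix (Fin n) (Fin m) ℝ, A * Q = Y → Pᵀ * A = Xᵀ →
      frobSq (Y * Qp + Ppᵀ * Xᵀ - Ppᵀ * Pᵀ * Y * Qp) ≤ frobSq A ∧
      (frobSq A = frobSq (Y * Qp + Ppᵀ * Xᵀ - Ppᵀ * Pᵀ * Y * Qp) →
        A = Y * Qp + Ppᵀ * Xᵀ - Ppᵀ * Pᵀ * Y * Qp)) := by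
  obtain ⟨hQ1, hQ2, hQ3, hQ4⟩ := hQp
  obtain ⟨hP1, hP2, hP3, hP4⟩ := hPp
  set E := Y * Qp + Ppᵀ * Xᵀ - Ppᵀ * Pᵀ * Y * Qp with hE
  have hXT : Xᵀ = Pᵀ * A₀ := by rw [hX, Matrix.transpose_mul, Matrix.transpose_transpose]
  have hYQ : Y * (Qp * Q) = Y := by
    rw [hY, Matrix.mul_assoc, ← Matrix.mul_assoc Q Qp Q, hQ1]
  have hXQ : Xᵀ * Q = Pᵀ * Y := by
    rw [hXT, Matrix.mul_assoc, ← hY]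
  have hPPP : Pᵀ * (Ppᵀ * Pᵀ) = Pᵀ := by
    have := congrArg Matrix.transpose hP1
    simpa [Matrix.transpose_mul, Matrix.mul_assoc] using this
  have hPPX : Pᵀ * (Ppᵀ * Xᵀ) = Xᵀ := by
    rw [hXT]
    calc Pᵀ * (Ppᵀ * (Pᵀ * A₀)) = Pᵀ * (Ppᵀ * Pᵀ) * A₀ := by simp only [Matrix.mul_assoc]
    _ = Pᵀ * A₀ := by rw [hPPP]
  have goal1 : E * Q = Y := by
    rw [hE]
    simp only [Matrix.add_mul, Matrix.sub_mul, Matrix.mul_assoc]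
    rw [hYQ, hXQ]
    abel
  have goal2 : Pᵀ * E = Xᵀ := by
    rw [hE]
    simp only [Matrix.mul_add, Matrix.mul_sub]
    rw [hPPX]
    have h3 : Pᵀ * (Ppᵀ * Pᵀ * Y * Qp) = Pᵀ * Y * Qp := by
      calc Pᵀ * (Ppᵀ * Pᵀ * Y * Qp) = Pᵀ * (Ppᵀ * Pᵀ) * Y * Qp := by
            simp only [Matrix.mul_assoc]
      _ = Pᵀ * Y * Qp := by rw [hPPP]
    rw [h3, ← Matrix.mul_assoc]
    abel
  refine ⟨goal1, goal2, ?_⟩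
  intro A hAQ hPA
  set D := A - E with hD
  have hA : A = E + D := by rw [hD]; abel
  have hDQ : D * Q = 0 := by
    rw [hD, Matrix.sub_mul, hAQ, goal1, sub_self]
  have hPD : Pᵀ * D = 0 := by
    rw [hD, Matrix.mul_sub, hPA, goal2, sub_self]
  have hPpD : Pp * D = 0 := by
    have h1 : Pp * D = Pp * (Ppᵀ * (Pᵀ * D)) := by
      calc Pp * D = Pp * P * Pp * D := by rw [hP2]
      _ = Pp * ((P * Pp) * D) := by simp only [Matrix.mul_assoc]
      _ = Pp * ((P * Pp)ᵀ * D) := by rw [hP3]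
      _ = Pp * (Ppᵀ * (Pᵀ * D)) := by rw [Matrix.transpose_mul, Matrix.mul_assoc]
    rw [h1, hPD, Matrix.mul_zero, Matrix.mul_zero]
  have hDQp : D * Qpᵀ = 0 := by
    have hq : Qpᵀ = Q * (Qp * Qpᵀ) := by
      have h := congrArg Matrix.transpose hQ2
      rw [Matrix.transpose_mul, Matrix.transpose_mul, ← Matrix.mul_assoc] at h
      have h3' : Qpᵀ * Qᵀ = Q * Qp := by rw [← Matrix.transpose_mul, hQ3]
      rw [h3', Matrix.mul_assoc] at h
      exact h.symm
    rw [hq, ← Matrix.mul_assoc, hDQ, Matrix.zero_mul]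
  have hT : Matrix.trace (Eᵀ * D) = 0 := by
    have e1 : Eᵀ * D = Qpᵀ * (Yᵀ * D) + X * (Pp * D) - Qpᵀ * (Yᵀ * (P * (Pp * D))) := by
      rw [hE]
      simp only [Matrix.transpose_sub, Matrix.transpose_add, Matrix.transpose_mul,
        Matrix.transpose_transpose, Matrix.add_mul, Matrix.sub_mul, Matrix.mul_assoc]
    rw [e1, hPpD]
    simp only [Matrix.mul_zero, Matrix.trace_add, Matrix.trace_sub, Matrix.trace_zero,
      add_zero, sub_zero]
    have : Matrix.trace (Qpᵀ * (Yᵀ * D)) = Matrix.trace (Yᵀ * (D * Qpᵀ)) := by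
      rw [Matrix.trace_mul_comm, Matrix.mul_assoc]
    rw [this, hDQp, Matrix.mul_zero, Matrix.trace_zero]
  have hDE : Matrix.trace (Dᵀ * E) = 0 := by
    have : (Eᵀ * D)ᵀ = Dᵀ * E := by
      rw [Matrix.transpose_mul, Matrix.transpose_transpose]
    rw [← this, Matrix.trace_transpose, hT]
  have hsplit : frobSq A = frobSq E + frobSq D := by
    rw [hA, frobSq_eq_trace, frobSq_eq_trace, frobSq_eq_trace, Matrix.transpose_add,
      Matrix.add_mul, Matrix.mul_add, Matrix.mul_add, Matrix.trace_add, Matrix.trace_add,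
      Matrix.trace_add, hT, hDE]
    ring
  constructor
  · rw [hsplit]
    linarith [frobSq_nonneg D]
  · intro heq
    have hdz : frobSq D = 0 := by linarith [hsplit, heq]
    have := frobSq_eq_zero hdz
    rw [hD] at this
    exact sub_eq_zero.mp this
end

section
/- Let Π ∈ ℝ^{n×n} be an orthogonal projection matrix of rank k with k ≥ n/2 and all diagonal entries Π_{ii} positive. Let C = D^{−1/2} Π D^{−1/2} where D = diag(Π_{11},...,Π_{nn}) be the associated correlation matrix. Then the off-diagonal entries of C satisfy ∑_{i<j} C_{ij}² ≤ 2.5(n−k)². -/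
open Matrix Finset

set_option maxHeartbeats 1600000 in
/-- Off-diagonal correlation bound for high-rank orthogonal projections:
if `P` is an `n × n` orthogonal projection of rank `k ≥ n/2` with positive diagonal, then
the correlation matrix `C = D^{-1/2} P D^{-1/2}` satisfies `∑_{i<j} C_{ij}² ≤ 2.5 (n-k)²`. -/
theorem projection_correlation_offdiag_bound
    {n : ℕ} (P : Matrix (Fin n) (Fin n) ℝ)
    (hidem : P * P = P) (hsymm : Pᵀ = P)
    (k : ℕ) (hrank : P.rank = k) (hk : (n : ℝ) ≤ 2 * k)
    (hdiag : ∀ i, 0 < P i i) :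
    ∑ i : Fin n, ∑ j ∈ Finset.univ.filter (fun j : Fin n => i < j),
        (P i j / Real.sqrt (P i i * P j j)) ^ 2
      ≤ 2.5 * ((n : ℝ) - k) ^ 2 := by
  classical
  -- basic entrywise facts
  have hsym : ∀ i j, P j i = P i j := fun i j => by
    simpa using congrFun (congrFun hsymm i) j
  have hmul : ∀ i j, ∑ l, P i l * P l j = P i j := fun i j => by
    rw [← Matrix.mul_apply, hidem]
  have hrow : ∀ i, ∑ j, P i j ^ 2 = P i i := fun i => by
    rw [← hmul i i]
    exact Finset.sum_congr rfl fun j _ => by rw [hsym i j]; ring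
  have hCS : ∀ i j, P i j ^ 2 ≤ P i i * P j j := by
    intro i j
    have h1 : P i j = ∑ l, P i l * P j l := by
      rw [← hmul i j]
      exact Finset.sum_congr rfl fun l _ => by rw [hsym j l]
    calc P i j ^ 2 = (∑ l, P i l * P j l) ^ 2 := by rw [h1]
      _ ≤ (∑ l, P i l ^ 2) * (∑ l, P j l ^ 2) :=
          Finset.sum_mul_sq_le_sq_mul_sq _ _ _
      _ = P i i * P j j := by rw [hrow, hrow]
  have hle1 : ∀ i, P i i ≤ 1 := by
    intro i
    have h := hrow i
    have h2 : P i i ^ 2 ≤ ∑ j, P i j ^ 2 :=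
      Finset.single_le_sum (f := fun j => P i j ^ 2) (fun j _ => sq_nonneg _) (mem_univ i)
    nlinarith [hdiag i]
  -- trace equals rank
  have hcomp : P.mulVecLin ∘ₗ P.mulVecLin = P.mulVecLin := by
    rw [← Matrix.mulVecLin_mul, hidem]
  have hproj : LinearMap.IsProj (LinearMap.range P.mulVecLin) P.mulVecLin :=
    ⟨fun x => LinearMap.mem_range_self _ x, fun x hx => by
      obtain ⟨y, hy⟩ := hx
      rw [← hy, ← LinearMap.comp_apply, hcomp]⟩
  have htr : Matrix.trace P = (k : ℝ) := by
    have h1 : LinearMap.trace ℝ (Fin n → ℝ) P.mulVecLin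
        = (Module.finrank ℝ (LinearMap.range P.mulVecLin) : ℝ) := hproj.trace
    have h2 : LinearMap.trace ℝ (Fin n → ℝ) P.mulVecLin = Matrix.trace P := by
      rw [LinearMap.trace_eq_matrix_trace ℝ (Pi.basisFun ℝ (Fin n)),
        LinearMap.toMatrix_eq_toMatrix']
      congr 1
      have h3 : P.mulVecLin = Matrix.toLin' P := rfl
      rw [h3, LinearMap.toMatrix'_toLin']
    rw [← h2, h1]
    exact_mod_cast hrank
  have htrdiag : ∑ i, P i i = (k : ℝ) := by
    simpa [Matrix.trace, Matrix.diag] using htr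
  have hkn : k ≤ n := by
    rw [← hrank]
    exact P.rank_le_width
  obtain ⟨m, hmdef⟩ : ∃ m : ℝ, m = (n : ℝ) - k := ⟨_, rfl⟩
  have hm0 : 0 ≤ m := by
    rw [hmdef]
    have : (k:ℝ) ≤ (n:ℝ) := by exact_mod_cast hkn
    linarith
  have hm : ∑ i, (1 - P i i) = m := by
    rw [hmdef, Finset.sum_sub_distrib, htrdiag]
    simp
  have hmcast : m = ((n - k : ℕ) : ℝ) := by
    rw [hmdef, Nat.cast_sub hkn]
  -- the correlation entries
  set f : Fin n → Fin n → ℝ := fun i j => (P i j / Real.sqrt (P i i * P j j)) ^ 2 with hf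
  have hfeq : ∀ i j, f i j = P i j ^ 2 / (P i i * P j j) := by
    intro i j
    have hpos : (0:ℝ) ≤ P i i * P j j := (mul_pos (hdiag i) (hdiag j)).le
    show (P i j / Real.sqrt (P i i * P j j)) ^ 2 = _
    rw [div_pow, Real.sq_sqrt hpos]
  have hf0 : ∀ i j, 0 ≤ f i j := fun i j => sq_nonneg _
  have hfsym : ∀ i j, f i j = f j i := fun i j => by
    rw [hfeq, hfeq, hsym i j, mul_comm]
  have hf1 : ∀ i j, f i j ≤ 1 := fun i j => by
    rw [hfeq]
    exact (div_le_one (mul_pos (hdiag i) (hdiag j))).mpr (hCS i j)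
  -- good and bad indices
  set G : Finset (Fin n) := univ.filter (fun i => (0.4:ℝ) ≤ P i i) with hG
  set B : Finset (Fin n) := univ.filter (fun i => P i i < (0.4:ℝ)) with hB
  have hbm : (0.6:ℝ) * B.card ≤ m := by
    have h1 : ∀ i ∈ B, (0.6:ℝ) ≤ 1 - P i i := by
      intro i hi
      rw [hB] at hi
      simp only [Finset.mem_filter, Finset.mem_univ, true_and] at hi
      linarith
    calc (0.6:ℝ) * B.card = ∑ _i ∈ B, (0.6:ℝ) := by
          rw [Finset.sum_const, nsmul_eq_mul]; ring
      _ ≤ ∑ i ∈ B, (1 - P i i) := Finset.sum_le_sum h1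
      _ ≤ ∑ i, (1 - P i i) := by
          apply Finset.sum_le_sum_of_subset_of_nonneg (Finset.subset_univ B)
          intro i _ _
          linarith [hle1 i]
      _ = m := hm
  -- off diagonal row sums
  have hrowoff : ∀ i, ∑ j ∈ univ.erase i, P i j ^ 2 = P i i - P i i ^ 2 := by
    intro i
    rw [Finset.sum_erase_eq_sub (mem_univ i), hrow i]
  -- the key per-row bound over good columns
  have hTG : ∀ i, ∑ j ∈ G.erase i, f i j ≤ 2.5 * (1 - P i i) := by
    intro i
    have hstep : ∀ j ∈ G.erase i, f i j ≤ P i j ^ 2 * (2.5 / P i i) := by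
      intro j hj
      have hjG : (0.4:ℝ) ≤ P j j := by
        have h := Finset.mem_of_mem_erase hj
        rw [hG] at h
        simpa using h
      rw [hfeq]
      have hc : (0:ℝ) < P i i * 0.4 := by nlinarith [hdiag i]
      have hcb : P i i * 0.4 ≤ P i i * P j j := by nlinarith [hdiag i]
      have h1 : P i j ^ 2 / (P i i * P j j) ≤ P i j ^ 2 / (P i i * 0.4) :=
        div_le_div_of_nonneg_left (sq_nonneg _) hc hcb
      have h2 : P i j ^ 2 / (P i i * 0.4) = P i j ^ 2 * (2.5 / P i i) := by
        have := (hdiag i).ne'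
        field_simp
        ring
      linarith
    calc ∑ j ∈ G.erase i, f i j ≤ ∑ j ∈ G.erase i, P i j ^ 2 * (2.5 / P i i) :=
          Finset.sum_le_sum hstep
      _ ≤ ∑ j ∈ univ.erase i, P i j ^ 2 * (2.5 / P i i) := by
          apply Finset.sum_le_sum_of_subset_of_nonneg
            (Finset.erase_subset_erase _ (Finset.subset_univ G))
          intro j _ _
          exact mul_nonneg (sq_nonneg _) (div_nonneg (by norm_num) (hdiag i).le)
      _ = (P i i - P i i ^ 2) * (2.5 / P i i) := by
          rw [← Finset.sum_mul, hrowoff]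
      _ = 2.5 * (1 - P i i) := by
          have hne := (hdiag i).ne'
          field_simp
  have hTGsum : ∑ i, ∑ j ∈ G.erase i, f i j ≤ 2.5 * m := by
    calc ∑ i, ∑ j ∈ G.erase i, f i j ≤ ∑ i, 2.5 * (1 - P i i) :=
          Finset.sum_le_sum fun i _ => hTG i
      _ = 2.5 * m := by rw [← Finset.mul_sum, hm]
  -- the bad-bad block
  have hTBB : ∑ i ∈ B, ∑ j ∈ B.erase i, f i j ≤ (B.card:ℝ) * ((B.card:ℝ) - 1) := by
    rcases Finset.eq_empty_or_nonempty B with h | h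
    · simp [h]
    · have hb1 : 1 ≤ B.card := Finset.card_pos.mpr h
      calc ∑ i ∈ B, ∑ j ∈ B.erase i, f i j ≤ ∑ _i ∈ B, ((B.card:ℝ) - 1) := by
            apply Finset.sum_le_sum
            intro i hi
            calc ∑ j ∈ B.erase i, f i j ≤ ∑ _j ∈ B.erase i, (1:ℝ) :=
                  Finset.sum_le_sum fun j _ => hf1 i j
              _ = ((B.erase i).card : ℝ) := by simp
              _ = (B.card:ℝ) - 1 := by
                  rw [Finset.card_erase_of_mem hi, Nat.cast_sub hb1]
                  simp
        _ = (B.card:ℝ) * ((B.card:ℝ) - 1) := by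
            rw [Finset.sum_const, nsmul_eq_mul]
  -- the cross block is at most the good-column sum
  have hcross : ∑ i ∈ G, ∑ j ∈ B.erase i, f i j ≤ ∑ i, ∑ j ∈ G.erase i, f i j := by
    have hGB : ∀ i ∈ G, B.erase i = B := by
      intro i hi
      apply Finset.erase_eq_of_notMem
      rw [hG] at hi; rw [hB]
      simp only [Finset.mem_filter, Finset.mem_univ, true_and] at hi ⊢
      linarith
    have hBG : ∀ i ∈ B, G.erase i = G := by
      intro i hi
      apply Finset.erase_eq_of_notMem
      rw [hB] at hi; rw [hG]
      simp only [Finset.mem_filter, Finset.mem_univ, true_and] at hi ⊢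
      linarith
    calc ∑ i ∈ G, ∑ j ∈ B.erase i, f i j = ∑ i ∈ G, ∑ j ∈ B, f i j :=
          Finset.sum_congr rfl fun i hi => by rw [hGB i hi]
      _ = ∑ j ∈ B, ∑ i ∈ G, f i j := Finset.sum_comm
      _ = ∑ j ∈ B, ∑ i ∈ G, f j i :=
          Finset.sum_congr rfl fun j _ => Finset.sum_congr rfl fun i _ => hfsym i j
      _ = ∑ j ∈ B, ∑ i ∈ G.erase j, f j i :=
          Finset.sum_congr rfl fun j hj => by rw [hBG j hj]
      _ ≤ ∑ j, ∑ i ∈ G.erase j, f j i := by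
          apply Finset.sum_le_sum_of_subset_of_nonneg (Finset.subset_univ B)
          intro j _ _
          exact Finset.sum_nonneg fun i _ => hf0 j i
  -- splitting the full off-diagonal sum
  have hsplit : ∀ i, ∑ j ∈ univ.erase i, f i j
      = ∑ j ∈ G.erase i, f i j + ∑ j ∈ B.erase i, f i j := by
    intro i
    have h1 : (univ.erase i).filter (fun j => (0.4:ℝ) ≤ P j j) = G.erase i := by
      ext j
      simp only [Finset.mem_filter, Finset.mem_erase, Finset.mem_univ, true_and, and_true, hG]
    have h2 : (univ.erase i).filter (fun j => ¬ (0.4:ℝ) ≤ P j j) = B.erase i := by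
      ext j
      simp only [Finset.mem_filter, Finset.mem_erase, Finset.mem_univ, true_and, and_true,
        hB, not_le]
    rw [← h1, ← h2, Finset.sum_filter_add_sum_filter_not]
  have hsplitout : ∑ i, ∑ j ∈ B.erase i, f i j
      = ∑ i ∈ G, ∑ j ∈ B.erase i, f i j + ∑ i ∈ B, ∑ j ∈ B.erase i, f i j := by
    have h1 : univ.filter (fun i => (0.4:ℝ) ≤ P i i) = G := hG.symm
    have h2 : univ.filter (fun i => ¬ (0.4:ℝ) ≤ P i i) = B := by
      rw [hB]
      apply Finset.filter_congr
      intro i _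
      simp [not_le]
    rw [← h1, ← h2, Finset.sum_filter_add_sum_filter_not]
  have hT : ∑ i, ∑ j ∈ univ.erase i, f i j ≤ 5 * m + (B.card:ℝ) * ((B.card:ℝ) - 1) := by
    calc ∑ i, ∑ j ∈ univ.erase i, f i j
        = ∑ i, ∑ j ∈ G.erase i, f i j + ∑ i, ∑ j ∈ B.erase i, f i j := by
          rw [← Finset.sum_add_distrib]
          exact Finset.sum_congr rfl fun i _ => hsplit i
      _ = ∑ i, ∑ j ∈ G.erase i, f i j
          + (∑ i ∈ G, ∑ j ∈ B.erase i, f i j + ∑ i ∈ B, ∑ j ∈ B.erase i, f i j) := by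
          rw [hsplitout]
      _ ≤ 2.5 * m + (2.5 * m + (B.card:ℝ) * ((B.card:ℝ) - 1)) := by
          have := hcross.trans hTGsum
          linarith [hTGsum, hTBB]
      _ = 5 * m + (B.card:ℝ) * ((B.card:ℝ) - 1) := by ring
  -- the goal sum is half of the off-diagonal sum
  have hgoal2 : 2 * (∑ i : Fin n, ∑ j ∈ Finset.univ.filter (fun j : Fin n => i < j), f i j)
      = ∑ i, ∑ j ∈ univ.erase i, f i j := by
    have hlt : ∑ i : Fin n, ∑ j ∈ Finset.univ.filter (fun j : Fin n => i < j), f i j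
        = ∑ i, ∑ j, if i < j then f i j else 0 :=
      Finset.sum_congr rfl fun i _ => Finset.sum_filter _ _
    have hswap : (∑ i, ∑ j, if i < j then f i j else 0)
        = ∑ i, ∑ j, if j < i then f i j else 0 := by
      rw [Finset.sum_comm]
      exact Finset.sum_congr rfl fun i _ => Finset.sum_congr rfl fun j _ => by
        by_cases h : j < i <;> simp [h, hfsym j i]
    have htri : ∀ i, ∑ j ∈ univ.erase i, f i j
        = (∑ j, if i < j then f i j else 0) + (∑ j, if j < i then f i j else 0) := by
      intro i
      have hpt : ∀ j, (if j ≠ i then f i j else 0)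
          = (if i < j then f i j else 0) + (if j < i then f i j else 0) := by
        intro j
        rcases lt_trichotomy i j with h | h | h
        · simp [h, h.ne', h.asymm]
        · subst h; simp
        · simp [h, h.ne, h.asymm]
      calc ∑ j ∈ univ.erase i, f i j = ∑ j, if j ≠ i then f i j else 0 := by
            rw [← Finset.sum_filter, Finset.filter_ne']
        _ = (∑ j, if i < j then f i j else 0) + (∑ j, if j < i then f i j else 0) := by
            rw [← Finset.sum_add_distrib]
            exact Finset.sum_congr rfl fun j _ => hpt j
    rw [hlt]
    rw [Finset.sum_congr rfl fun i (_ : i ∈ univ) => htri i, Finset.sum_add_distrib, ← hswap]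
    ring
  -- final arithmetic
  have hgoalf : ∑ i : Fin n, ∑ j ∈ Finset.univ.filter (fun j : Fin n => i < j),
      (P i j / Real.sqrt (P i i * P j j)) ^ 2
      = ∑ i : Fin n, ∑ j ∈ Finset.univ.filter (fun j : Fin n => i < j), f i j := by
    simp only [hf]
  obtain ⟨S, hSdef⟩ : ∃ S : ℝ,
      S = ∑ i : Fin n, ∑ j ∈ Finset.univ.filter (fun j : Fin n => i < j), f i j := ⟨_, rfl⟩
  have hSbound : 2 * S ≤ 5 * m + (B.card:ℝ) * ((B.card:ℝ) - 1) := by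
    rw [hSdef, hgoal2]; exact hT
  obtain ⟨b, hbdef⟩ : ∃ b : ℝ, b = (B.card : ℝ) := ⟨_, rfl⟩
  rw [← hbdef] at hSbound
  have hbm' : (0.6:ℝ) * b ≤ m := by rw [hbdef]; exact hbm
  have hb0 : 0 ≤ b := by rw [hbdef]; positivity
  have hfinal : S ≤ 2.5 * m ^ 2 := by
    rcases le_or_gt b 1 with hb1 | hb1
    · have h1 : b * (b - 1) ≤ 0 := mul_nonpos_of_nonneg_of_nonpos hb0 (by linarith)
      rcases Nat.eq_zero_or_pos (n - k) with h | h
      · have hm0' : m = 0 := by rw [hmcast, h]; simp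
        rw [hm0'] at hSbound
        rw [hm0']
        nlinarith
      · have hm1 : (1:ℝ) ≤ m := by
          rw [hmcast]
          exact_mod_cast h
        nlinarith [mul_nonneg (by linarith : (0:ℝ) ≤ m - 1) (by linarith : (0:ℝ) ≤ m)]
    · have hb2 : (2:ℝ) ≤ b := by
        have h1 : (1:ℕ) < B.card := by rw [hbdef] at hb1; exact_mod_cast hb1
        rw [hbdef]
        exact_mod_cast h1
      have hm2 : (2:ℝ) ≤ m := by
        have h12 : (1.2:ℝ) ≤ m := by linarith
        have h1 : (1:ℕ) < n - k := by
          have h2 : (1:ℝ) < ((n - k : ℕ) : ℝ) := by rw [← hmcast]; linarith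
          exact_mod_cast h2
        rw [hmcast]
        exact_mod_cast h1
      nlinarith [mul_nonneg (by linarith : (0:ℝ) ≤ 5 * m / 3 - b)
          (by linarith : (0:ℝ) ≤ b - 1),
        mul_nonneg (by linarith : (0:ℝ) ≤ 5 * m / 3 - b) hm0,
        mul_nonneg hm0 (by linarith : (0:ℝ) ≤ 2 * m - 3)]
  calc ∑ i : Fin n, ∑ j ∈ Finset.univ.filter (fun j : Fin n => i < j),
        (P i j / Real.sqrt (P i i * P j j)) ^ 2
      = S := hgoalf.trans hSdef.symm
    _ ≤ 2.5 * m ^ 2 := hfinal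
    _ = 2.5 * ((n : ℝ) - k) ^ 2 := by rw [hmdef]
end

section
/- Let X = (X₁,...,Xₙ) be a mean-zero multivariate Gaussian with nondegenerate covariance, and let f be an L²(X)-integrable function. Then for each i, E[X_i f(X)] = ∑_{j=1}^n (Cov(X_i, X_j)/Var(X_j | X_{∖j})) · E[(X_j − E[X_j | X_{∖j}]) f(X)], where X_{∖j} denotes X with the j-th coordinate removed, E[X_j|X_{∖j}] = Cov(X_j, X_{∖j})Cov(X_{∖j}, X_{∖j})⁺X_{∖j}, and Var(X_j|X_{∖j}) = Var(X_j) − Cov(X_j, X_{∖j})Cov(X_{∖j}, X_{∖j})⁺Cov(X_{∖j}, X_j). -/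
open MeasureTheory ProbabilityTheory Matrix

/-- A measure `ν` on `d → ℝ` is the multivariate Gaussian with mean `m` and covariance `K`
iff every linear functional pushes it forward to the corresponding real Gaussian. -/
def IsGaussianVec {d : Type*} [Fintype d] [MeasurableSpace (d → ℝ)]
    (m : d → ℝ) (K : Matrix d d ℝ) (ν : Measure (d → ℝ)) : Prop :=
  ∀ l : d → ℝ, Measure.map (fun x => ∑ i, l i * x i) ν
    = gaussianReal (∑ i, l i * m i) (Real.toNNReal (l ⬝ᵥ K.mulVec l))

/-! The residual `X_j - E[X_j | X_{∖j}]` is the linear functional `⟨w_j, X⟩`, and a Schur complement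
computation gives `K w_j = Var(X_j | X_{∖j}) e_j` (positive definiteness of `K` makes the
pseudoinverse of `K_{∖j,∖j}` a true inverse). Hence `w_j = Var(X_j | X_{∖j}) K⁻¹ e_j`, so
`∑_j K_ij / Var(X_j | X_{∖j}) ⟨w_j, x⟩ = (K K⁻¹ x)_i = x_i` for every `x`. Multiplying by `f` and
integrating gives the formula; all integrals exist because Gaussian linear functionals are in `L²`. -/

lemma IsGaussianVec.memLp_sum_mul {ι : Type*} [Fintype ι] {m : ι → ℝ} {K : Matrix ι ι ℝ}
    {ν : Measure (ι → ℝ)} (hν : IsGaussianVec m K ν) (l : ι → ℝ)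
    {p : ENNReal} (hp : p ≠ ⊤) :
    MemLp (fun x => ∑ i, l i * x i) p ν := by
  have hmeas : Measurable fun x : ι → ℝ => ∑ i, l i * x i := by fun_prop
  have h := memLp_id_gaussianReal' (μ := ∑ i, l i * m i) (v := (l ⬝ᵥ K *ᵥ l).toNNReal) p hp
  rwa [← hν l, memLp_map_measure_iff aestronglyMeasurable_id hmeas.aemeasurable] at h

lemma IsMoorePenrose.mul_eq_one {ι : Type*} [Fintype ι] [DecidableEq ι]
    {A B : Matrix ι ι ℝ} (h : IsMoorePenrose A B) (hA : IsUnit A) : B * A = 1 :=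
  hA.mul_left_cancel (by rw [← mul_assoc, h.1, mul_one])

section ConditionalResidual

variable {ι : Type*} [Fintype ι] [DecidableEq ι] (K : Matrix ι ι ℝ) (j : ι)
  (B : Matrix {k // k ≠ j} {k // k ≠ j} ℝ)

def gaussCondMean (x : ι → ℝ) : ℝ :=
  ∑ a : {k // k ≠ j}, ∑ b : {k // k ≠ j}, K j a * B a b * x b

def gaussCondVar : ℝ :=
  K j j - gaussCondMean K j B (K · j)

def residualWeights (m : ι) : ℝ :=
  if h : m = j then 1 else -∑ a : {k // k ≠ j}, K j a * B a ⟨m, h⟩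

lemma sum_residualWeights_mul (x : ι → ℝ) :
    ∑ m, residualWeights K j B m * x m = x j - gaussCondMean K j B x := by
  have hw (b : {k // k ≠ j}) :
      residualWeights K j B b = -∑ a : {k // k ≠ j}, K j a * B a b := dif_neg b.2
  rw [Fintype.sum_eq_add_sum_subtype_ne _ j]
  simp_rw [hw, neg_mul, Finset.sum_mul, Finset.sum_neg_distrib]
  rw [Finset.sum_comm]
  simp [residualWeights, gaussCondMean, sub_eq_add_neg]

variable {K j B}

lemma mulVec_residualWeights (hK : K.IsSymm) (hB : B * K.submatrix (↑) (↑) = 1) :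
    K *ᵥ residualWeights K j B = Pi.single j (gaussCondVar K j B) := by
  ext m
  have hrow : (K *ᵥ residualWeights K j B) m = K m j - gaussCondMean K j B (K · m) := by
    simp only [mulVec, dotProduct, mul_comm (K m _), sum_residualWeights_mul, hK.apply m]
  rw [hrow]
  by_cases hm : m = j
  · subst hm; simp [gaussCondVar]
  · have hδ (a : {k // k ≠ j}) :
        ∑ b, B a b * K b m = (1 : Matrix {k // k ≠ j} {k // k ≠ j} ℝ) a ⟨m, hm⟩ := by
      rw [← hB]; rfl
    simp only [gaussCondMean, mul_assoc, ← Finset.mul_sum, hδ, one_apply, mul_ite, mul_one,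
      mul_zero, Finset.sum_ite_eq', Finset.mem_univ, if_true, Pi.single_apply, hm, if_false,
      hK.apply j m]
    ring

lemma residualWeights_eq_mul_inv (hK : K.IsSymm) (hdet : IsUnit K.det)
    (hB : B * K.submatrix (↑) (↑) = 1) (m : ι) :
    residualWeights K j B m = gaussCondVar K j B * K⁻¹ m j := by
  have h := congrArg (K⁻¹ *ᵥ ·) (mulVec_residualWeights hK hB)
  simp only [mulVec_mulVec, nonsing_inv_mul _ hdet, one_mulVec] at h
  rw [h, mulVec_single, Pi.smul_apply, op_smul_eq_mul, col_apply, mul_comm]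

lemma gaussCondVar_pos (hK : K.PosDef) (hB : B * K.submatrix (↑) (↑) = 1) :
    0 < gaussCondVar K j B := by
  have hw : residualWeights K j B ≠ 0 := fun h => by simpa [residualWeights] using congrFun h j
  have h := hK.dotProduct_mulVec_pos hw
  rwa [star_trivial, mulVec_residualWeights (isHermitian_iff_isSymm.mp hK.isHermitian) hB,
    dotProduct_single, residualWeights, dif_pos rfl, one_mul] at h

end ConditionalResidual

lemma sum_div_gaussCondVar_mul_residual {ι : Type*} [Fintype ι] [DecidableEq ι]
    {K : Matrix ι ι ℝ} (hK : K.PosDef) {B : ∀ j, Matrix {k // k ≠ j} {k // k ≠ j} ℝ}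
    (hB : ∀ j, B j * K.submatrix (↑) (↑) = 1) (i : ι) (x : ι → ℝ) :
    ∑ j, K i j / gaussCondVar K j (B j) * (x j - gaussCondMean K j (B j) x) = x i := by
  have hdet : IsUnit K.det := (isUnit_iff_isUnit_det _).mp hK.isUnit
  have hsymm : K.IsSymm := isHermitian_iff_isSymm.mp hK.isHermitian
  have hinv_symm : (K⁻¹).IsSymm := by rw [IsSymm, transpose_nonsing_inv, hsymm]
  have hcoeff : ∀ m, ∑ j, K i j / gaussCondVar K j (B j) * residualWeights K j (B j) m
      = (1 : Matrix ι ι ℝ) i m := by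
    intro m
    rw [← mul_nonsing_inv K hdet, mul_apply]
    refine Finset.sum_congr rfl fun j _ => ?_
    rw [residualWeights_eq_mul_inv hsymm hdet (hB j), hinv_symm.apply j m]
    field_simp [(gaussCondVar_pos hK (hB j)).ne']
  simp_rw [← sum_residualWeights_mul, Finset.mul_sum, ← mul_assoc]
  rw [Finset.sum_comm]
  simp_rw [← Finset.sum_mul, hcoeff, one_apply, ite_mul, one_mul, zero_mul]
  simp

/-- Multivariate Stein's lemma: for a centered nondegenerate Gaussian `X ∼ N(0, K)` and
`f ∈ L²(X)`,
`E[X_i f(X)] = ∑_j (Cov(X_i,X_j)/Var(X_j|X_{∖j})) E[(X_j − E[X_j|X_{∖j}]) f(X)]`,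
where the conditional mean and variance are expressed via the Moore–Penrose pseudoinverse
of the covariance of the remaining coordinates. -/
theorem stein_lemma_multivariate
    {n : ℕ} (K : Matrix (Fin n) (Fin n) ℝ) (hK : K.PosDef)
    (ν : Measure (Fin n → ℝ)) (hν : IsGaussianVec (fun _ => 0) K ν)
    (Kp : ∀ j : Fin n, Matrix {k : Fin n // k ≠ j} {k : Fin n // k ≠ j} ℝ)
    (hKp : ∀ j, IsMoorePenrose (Matrix.of fun a b : {k : Fin n // k ≠ j} =>
      K (a : Fin n) (b : Fin n)) (Kp j))
    (f : (Fin n → ℝ) → ℝ) (hf : MemLp f 2 ν)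
    (i : Fin n) :
    ∫ x, x i * f x ∂ν
      = ∑ j : Fin n,
          (K i j /
            (K j j - ∑ a : {k : Fin n // k ≠ j}, ∑ b : {k : Fin n // k ≠ j},
              K j (a : Fin n) * Kp j a b * K (b : Fin n) j))
          * ∫ x, (x j - ∑ a : {k : Fin n // k ≠ j}, ∑ b : {k : Fin n // k ≠ j},
              K j (a : Fin n) * Kp j a b * x (b : Fin n)) * f x ∂ν := by
  have hB : ∀ j, Kp j * K.submatrix (↑) (↑) = 1 := fun j =>
    (hKp j).mul_eq_one (hK.submatrix Subtype.val_injective).isUnit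
  have hint : ∀ j, Integrable (fun x => (x j - gaussCondMean K j (Kp j) x) * f x) ν := by
    intro j
    simp_rw [← sum_residualWeights_mul]
    exact (hν.memLp_sum_mul _ (p := 2) ENNReal.ofNat_ne_top).integrable_mul hf
  calc ∫ x, x i * f x ∂ν
      = ∫ x, ∑ j, K i j / gaussCondVar K j (Kp j)
          * ((x j - gaussCondMean K j (Kp j) x) * f x) ∂ν := by
        simp_rw [← mul_assoc, ← Finset.sum_mul, sum_div_gaussCondVar_mul_residual hK hB]
    _ = ∑ j, K i j / gaussCondVar K j (Kp j)
          * ∫ x, (x j - gaussCondMean K j (Kp j) x) * f x ∂ν := by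
        rw [integral_finsetSum _ fun j _ => (hint j).const_mul _]
        simp_rw [integral_const_mul]
end

section
/- A function φ: ℝᵏ → ℝ is called α-controlled if there exist C, c > 0 with |φ(x)| ≤ exp(C∑_{i=1}^k |x_i|^α + c) for all x. If φ: ℝᵏ → ℝ is α-controlled with 1 ≤ α < 2, then there exists C > 0 such that for all μ ∈ ℝᵏ and all positive semidefinite Σ, E_{z∼N(μ,Σ)}|φ(z)| ≤ C·exp(C‖μ‖₂^α)·𝖢_α^k(C·α·‖Σ‖₂^{α/2}), where 𝖢_α^k(c) = E_{w∼N(0,I_k)}[exp(c‖w‖₂^α)] < ∞. -/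
open MeasureTheory ProbabilityTheory Matrix ENNReal

/-- The standard Gaussian measure on `Fin k → ℝ`. -/
noncomputable def stdGaussian (k : ℕ) : Measure (Fin k → ℝ) :=
  Measure.pi fun _ : Fin k => gaussianReal 0 1

/-- Euclidean norm on `Fin k → ℝ`. -/
noncomputable def euclNorm {k : ℕ} (x : Fin k → ℝ) : ℝ :=
  Real.sqrt (∑ i, (x i) ^ 2)

/-- Spectral (ℓ² operator) norm of a matrix. -/
noncomputable def matSpectralNorm {k : ℕ} (S : Matrix (Fin k) (Fin k) ℝ) : ℝ :=
  sSup {r : ℝ | ∃ x : Fin k → ℝ, euclNorm x = 1 ∧ r = euclNorm (S.mulVec x)}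

/-- `𝖢_α^k(c) := E_{w ∼ N(0, I_k)} exp (c ‖w‖₂^α)`, as a Lebesgue integral. -/
noncomputable def gaussMGF (k : ℕ) (α c : ℝ) : ENNReal :=
  ∫⁻ w, ENNReal.ofReal (Real.exp (c * euclNorm w ^ α)) ∂(stdGaussian k)

/-- `φ : ℝᵏ → ℝ` is `α`-controlled if `|φ(x)| ≤ exp (C ∑ᵢ |xᵢ|^α + c)` for some `C, c > 0`. -/
def AlphaControlled {k : ℕ} (α : ℝ) (φ : (Fin k → ℝ) → ℝ) : Prop :=
  ∃ C c : ℝ, 0 < C ∧ 0 < c ∧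
    ∀ x : Fin k → ℝ, |φ x| ≤ Real.exp (C * ∑ i, |x i| ^ α + c)

/-!
Since `∑ᵢ bᵢ ≤ k · maxᵢ bᵢ`, an `α`-controlled `φ` satisfies
`|φ z| ≤ e^c (1 + ∑ᵢ exp (k C |zᵢ|^α))`, so only one coordinate at a time has to be integrated.
Each coordinate of `N(μ, Σ)` is distributed as `μᵢ + √Σᵢᵢ w` with `w ∼ N(0, 1)`; the convexity bound
`(s + t)^α ≤ 2^(α-1) (s^α + t^α)`, `Σᵢᵢ ≤ ‖Σ‖₂` and `|wᵢ| ≤ ‖w‖₂`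
turn its contribution into `exp (C ‖μ‖₂^α) · 𝖢_α^k(C α ‖Σ‖₂^(α/2))`.
Finiteness of `𝖢_α^k(c)`: as `α < 2`, `c t^α ≤ ε t² + M` for every `ε > 0`, and Fernique's theorem
makes `exp (ε ‖w‖₂²)` integrable for some `ε > 0`.
-/

open Filter

lemma Real.rpow_add_le_mul_rpow_add_rpow {a b p : ℝ} (ha : 0 ≤ a) (hb : 0 ≤ b) (hp : 1 ≤ p) :
    (a + b) ^ p ≤ 2 ^ (p - 1) * (a ^ p + b ^ p) := by
  lift a to NNReal using ha
  lift b to NNReal using hb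
  exact_mod_cast NNReal.rpow_add_le_mul_rpow_add_rpow a b hp

lemma Real.exp_sum_le_one_add_sum_exp_card_mul {ι : Type*} [Fintype ι] (b : ι → ℝ) :
    Real.exp (∑ i, b i) ≤ 1 + ∑ i, Real.exp (Fintype.card ι * b i) := by
  rcases isEmpty_or_nonempty ι with hι | hι
  · simp
  obtain ⟨j, -, hj⟩ := Finset.exists_max_image Finset.univ b Finset.univ_nonempty
  have hsum : ∑ i, b i ≤ Fintype.card ι * b j := by
    simpa using Finset.sum_le_card_nsmul Finset.univ b (b j) fun i _ => hj i (Finset.mem_univ i)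
  calc Real.exp (∑ i, b i) ≤ Real.exp (Fintype.card ι * b j) := Real.exp_le_exp.2 hsum
    _ ≤ ∑ i, Real.exp (Fintype.card ι * b i) :=
      Finset.single_le_sum (f := fun i => Real.exp (Fintype.card ι * b i))
        (fun i _ => (Real.exp_pos _).le) (Finset.mem_univ j)
    _ ≤ 1 + ∑ i, Real.exp (Fintype.card ι * b i) := le_add_of_nonneg_left zero_le_one

lemma exists_mul_rpow_le_mul_sq_add (c : ℝ) {α ε : ℝ} (hα0 : 0 ≤ α) (hα2 : α < 2) (hε : 0 < ε) :
    ∃ M, ∀ t : ℝ, 0 ≤ t → c * t ^ α ≤ ε * t ^ 2 + M := by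
  have hη : 0 < ε / (|c| + 1) := by positivity
  obtain ⟨T, hT⟩ := eventually_atTop.1 <|
    (tendsto_rpow_neg_atTop (sub_pos.2 hα2)).eventually (gt_mem_nhds hη)
  refine ⟨|c| * max T 1 ^ α, fun t ht => ?_⟩
  have hc : c * t ^ α ≤ |c| * t ^ α := by gcongr; exact le_abs_self c
  rcases le_total t (max T 1) with htT | hTt
  · have : |c| * t ^ α ≤ |c| * max T 1 ^ α := by gcongr
    nlinarith [sq_nonneg t]
  · have ht0 : 0 < t := one_pos.trans_le ((le_max_right _ _).trans hTt)
    have hsmall : t ^ (-(2 - α)) < ε / (|c| + 1) := hT t ((le_max_left _ _).trans hTt)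
    have hsplit : t ^ α = t ^ (-(2 - α)) * t ^ 2 := by
      rw [← Real.rpow_natCast, ← Real.rpow_add ht0]; norm_num
    have hcη : |c| * (ε / (|c| + 1)) ≤ ε := by
      rw [mul_div_assoc', div_le_iff₀ (by positivity)]; nlinarith [abs_nonneg c]
    calc c * t ^ α ≤ |c| * t ^ (-(2 - α)) * t ^ 2 := by rw [mul_assoc, ← hsplit]; exact hc
      _ ≤ ε * t ^ 2 := by
          gcongr
          exact (mul_le_mul_of_nonneg_left hsmall.le (abs_nonneg c)).trans hcη
      _ ≤ ε * t ^ 2 + |c| * max T 1 ^ α := le_add_of_nonneg_right (by positivity)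

section EuclideanNorm

variable {k : ℕ}

lemma euclNorm_eq_norm_toLp (x : Fin k → ℝ) : euclNorm x = ‖WithLp.toLp 2 x‖ := by
  simp [euclNorm, EuclideanSpace.norm_eq]

lemma euclNorm_nonneg (x : Fin k → ℝ) : 0 ≤ euclNorm x := Real.sqrt_nonneg _

lemma abs_le_euclNorm (x : Fin k → ℝ) (i : Fin k) : |x i| ≤ euclNorm x := by
  rw [euclNorm_eq_norm_toLp]
  exact PiLp.norm_apply_le (WithLp.toLp 2 x) i

lemma euclNorm_single (i : Fin k) : euclNorm (Pi.single i (1 : ℝ)) = 1 := by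
  simp [euclNorm_eq_norm_toLp, PiLp.toLp_single]

lemma matSpectralNorm_nonneg (S : Matrix (Fin k) (Fin k) ℝ) : 0 ≤ matSpectralNorm S :=
  Real.sSup_nonneg <| by
    rintro _ ⟨x, -, rfl⟩
    rw [euclNorm_eq_norm_toLp]
    positivity

lemma euclNorm_mulVec_le_matSpectralNorm (S : Matrix (Fin k) (Fin k) ℝ) {x : Fin k → ℝ}
    (hx : euclNorm x = 1) : euclNorm (S *ᵥ x) ≤ matSpectralNorm S := by
  have hbdd : ∀ y : Fin k → ℝ, euclNorm y = 1 →
      euclNorm (S *ᵥ y) ≤ ‖Matrix.toEuclideanCLM (n := Fin k) (𝕜 := ℝ) S‖ := fun y hy => by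
    have h := (Matrix.toEuclideanCLM (n := Fin k) (𝕜 := ℝ) S).le_opNorm (WithLp.toLp 2 y)
    rwa [Matrix.toEuclideanCLM_toLp, ← euclNorm_eq_norm_toLp, ← euclNorm_eq_norm_toLp, hy,
      mul_one] at h
  exact le_csSup ⟨_, by rintro _ ⟨y, hy, rfl⟩; exact hbdd y hy⟩ ⟨x, hx, rfl⟩

lemma diag_le_matSpectralNorm (S : Matrix (Fin k) (Fin k) ℝ) (i : Fin k) :
    S i i ≤ matSpectralNorm S :=
  calc S i i ≤ |(S *ᵥ Pi.single i 1) i| := by simp [le_abs_self]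
    _ ≤ euclNorm (S *ᵥ Pi.single i 1) := abs_le_euclNorm _ i
    _ ≤ matSpectralNorm S := euclNorm_mulVec_le_matSpectralNorm S (euclNorm_single i)

end EuclideanNorm

lemma gaussianReal_eq_map_sqrt_mul_add (m : ℝ) (v : NNReal) :
    gaussianReal m v = (gaussianReal 0 1).map (fun w => √v * w + m) := by
  have hscale : (gaussianReal 0 1).map (√v * ·) = gaussianReal 0 v := by
    rw [gaussianReal_map_const_mul, mul_zero]
    congr 1
    ext
    simp [Real.sq_sqrt v.coe_nonneg]
  calc gaussianReal m v = (gaussianReal 0 v).map (· + m) := by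
        rw [gaussianReal_map_add_const, zero_add]
    _ = _ := by
        rw [← hscale, Measure.map_map (measurable_add_const m) (measurable_const_mul _)]
        rfl

lemma lintegral_exp_mul_abs_rpow_gaussianReal_le {α a : ℝ} (hα : 1 ≤ α) (ha : 0 ≤ a) (m : ℝ)
    (v : NNReal) :
    ∫⁻ x, ENNReal.ofReal (Real.exp (a * |x| ^ α)) ∂gaussianReal m v
      ≤ ENNReal.ofReal (Real.exp (2 ^ (α - 1) * a * |m| ^ α)) *
        ∫⁻ w, ENNReal.ofReal (Real.exp (2 ^ (α - 1) * a * (v : ℝ) ^ (α / 2) * |w| ^ α))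
          ∂gaussianReal 0 1 := by
  have hα0 : 0 ≤ α := zero_le_one.trans hα
  rw [gaussianReal_eq_map_sqrt_mul_add, lintegral_map (by fun_prop) (by fun_prop),
    ← lintegral_const_mul' _ _ ENNReal.ofReal_ne_top]
  refine lintegral_mono fun w => ?_
  rw [← ENNReal.ofReal_mul (Real.exp_nonneg _), ← Real.exp_add]
  gcongr
  have hpow : (√v * |w|) ^ α = (v : ℝ) ^ (α / 2) * |w| ^ α := by
    rw [Real.mul_rpow (by positivity) (abs_nonneg w), Real.sqrt_eq_rpow,
      ← Real.rpow_mul v.coe_nonneg]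
    ring_nf
  calc a * |√v * w + m| ^ α ≤ a * (√v * |w| + |m|) ^ α := by
        gcongr
        exact (abs_add_le _ _).trans_eq (by rw [abs_mul, abs_of_nonneg (Real.sqrt_nonneg _)])
    _ ≤ a * (2 ^ (α - 1) * ((√v * |w|) ^ α + |m| ^ α)) := by
        gcongr
        exact Real.rpow_add_le_mul_rpow_add_rpow (by positivity) (abs_nonneg m) hα
    _ = 2 ^ (α - 1) * a * |m| ^ α + 2 ^ (α - 1) * a * v ^ (α / 2) * |w| ^ α := by
        rw [hpow]; ring

instance (k : ℕ) : IsProbabilityMeasure (_root_.stdGaussian k) := by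
  unfold _root_.stdGaussian; infer_instance

lemma lintegral_exp_mul_abs_rpow_gaussianReal_le_gaussMGF {k : ℕ} {α b c : ℝ} (hα : 0 ≤ α)
    (hb : 0 ≤ b) (hbc : b ≤ c) (i : Fin k) :
    ∫⁻ x, ENNReal.ofReal (Real.exp (b * |x| ^ α)) ∂gaussianReal 0 1 ≤ gaussMGF k α c := by
  rw [← (measurePreserving_eval (fun _ : Fin k => gaussianReal 0 1) i).lintegral_comp
    (by fun_prop)]
  refine lintegral_mono fun w => ?_
  have hwi : |w i| ^ α ≤ euclNorm w ^ α := by gcongr; exact abs_le_euclNorm w i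
  exact ENNReal.ofReal_le_ofReal <| Real.exp_le_exp.2 <|
    mul_le_mul hbc hwi (by positivity) (hb.trans hbc)

lemma one_le_gaussMGF (k : ℕ) (α : ℝ) {c : ℝ} (hc : 0 ≤ c) : 1 ≤ gaussMGF k α c := by
  calc (1 : ENNReal) = ∫⁻ _, 1 ∂_root_.stdGaussian k := by simp
    _ ≤ gaussMGF k α c := lintegral_mono fun w => by
      rw [← ENNReal.ofReal_one]
      gcongr
      exact Real.one_le_exp (mul_nonneg hc (Real.rpow_nonneg (euclNorm_nonneg w) α))

lemma gaussMGF_eq_lintegral_stdGaussian (k : ℕ) (α c : ℝ) :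
    gaussMGF k α c = ∫⁻ x, ENNReal.ofReal (Real.exp (c * ‖x‖ ^ α))
      ∂ProbabilityTheory.stdGaussian (EuclideanSpace ℝ (Fin k)) := by
  rw [← map_pi_eq_stdGaussian, lintegral_map (by fun_prop) (by fun_prop)]
  simp only [gaussMGF, euclNorm_eq_norm_toLp]
  rfl

lemma gaussMGF_lt_top (k : ℕ) {α : ℝ} (hα0 : 0 ≤ α) (hα2 : α < 2) (c : ℝ) :
    gaussMGF k α c < ⊤ := by
  obtain ⟨C, hC, hint⟩ := IsGaussian.exists_integrable_exp_sq
    (ProbabilityTheory.stdGaussian (EuclideanSpace ℝ (Fin k)))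
  obtain ⟨M, hM⟩ := exists_mul_rpow_le_mul_sq_add c hα0 hα2 hC
  rw [gaussMGF_eq_lintegral_stdGaussian]
  calc _ ≤ ∫⁻ x, ENNReal.ofReal (Real.exp M) * ENNReal.ofReal (Real.exp (C * ‖x‖ ^ 2))
        ∂ProbabilityTheory.stdGaussian (EuclideanSpace ℝ (Fin k)) := lintegral_mono fun x => by
          rw [← ENNReal.ofReal_mul (Real.exp_nonneg _), ← Real.exp_add]
          gcongr
          linarith [hM ‖x‖ (norm_nonneg x)]
    _ < ⊤ := by
      rw [lintegral_const_mul' _ _ ENNReal.ofReal_ne_top]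
      exact ENNReal.mul_lt_top ENNReal.ofReal_lt_top hint.lintegral_lt_top

namespace IsGaussianVec

variable {d : Type*} [Fintype d] {m : d → ℝ} {K : Matrix d d ℝ} {ν : Measure (d → ℝ)}

lemma isProbabilityMeasure (h : IsGaussianVec m K ν) : IsProbabilityMeasure ν := by
  have h0 : IsProbabilityMeasure (ν.map fun x => ∑ i, (0 : d → ℝ) i * x i) := by
    rw [h 0]; infer_instance
  exact (Measure.isProbabilityMeasure_map_iff
    (Finset.measurable_sum _ fun i _ => by fun_prop).aemeasurable).1 h0

lemma map_eval [DecidableEq d] (h : IsGaussianVec m K ν) (i : d) :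
    ν.map (fun x => x i) = gaussianReal (m i) (K i i).toNNReal := by
  simpa [Pi.single_apply, ite_mul] using h (Pi.single i 1)

end IsGaussianVec

lemma IsGaussianVec.lintegral_exp_mul_abs_rpow_le {k : ℕ} {m : Fin k → ℝ}
    {S : Matrix (Fin k) (Fin k) ℝ} {ν : Measure (Fin k → ℝ)} (hν : IsGaussianVec m S ν)
    {α a b c : ℝ} (hα : 1 ≤ α) (ha : 0 ≤ a) (hab : 2 ^ (α - 1) * a ≤ b)
    (hbc : b * matSpectralNorm S ^ (α / 2) ≤ c) (i : Fin k) :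
    ∫⁻ z, ENNReal.ofReal (Real.exp (a * |z i| ^ α)) ∂ν
      ≤ ENNReal.ofReal (Real.exp (b * euclNorm m ^ α)) * gaussMGF k α c := by
  have hα0 : 0 ≤ α := zero_le_one.trans hα
  have hvar : ((S i i).toNNReal : ℝ) ≤ matSpectralNorm S := by
    rw [Real.coe_toNNReal']
    exact max_le (diag_le_matSpectralNorm S i) (matSpectralNorm_nonneg S)
  have hmarg : ∫⁻ z, ENNReal.ofReal (Real.exp (a * |z i| ^ α)) ∂ν
      = ∫⁻ x, ENNReal.ofReal (Real.exp (a * |x| ^ α)) ∂gaussianReal (m i) (S i i).toNNReal := by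
    rw [← hν.map_eval i, lintegral_map (by fun_prop) (measurable_pi_apply i)]
  rw [hmarg]
  refine (lintegral_exp_mul_abs_rpow_gaussianReal_le hα ha _ _).trans ?_
  have hb : 0 ≤ b := (by positivity : 0 ≤ 2 ^ (α - 1) * a).trans hab
  gcongr ?_ * ?_
  · have hmi : |m i| ^ α ≤ euclNorm m ^ α := by gcongr; exact abs_le_euclNorm m i
    exact ENNReal.ofReal_le_ofReal <| Real.exp_le_exp.2 <| mul_le_mul hab hmi (by positivity) hb
  · refine lintegral_exp_mul_abs_rpow_gaussianReal_le_gaussMGF hα0 (by positivity)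
      (le_trans ?_ hbc) i
    exact mul_le_mul hab (by gcongr) (by positivity) hb

lemma lintegral_exp_sum_le_one_add_sum {ι Ω : Type*} [Fintype ι] [MeasurableSpace Ω]
    (ν : Measure Ω) [IsProbabilityMeasure ν] {f : ι → Ω → ℝ} (hf : ∀ i, Measurable (f i)) :
    ∫⁻ z, ENNReal.ofReal (Real.exp (∑ i, f i z)) ∂ν
      ≤ 1 + ∑ i, ∫⁻ z, ENNReal.ofReal (Real.exp (Fintype.card ι * f i z)) ∂ν := by
  calc ∫⁻ z, ENNReal.ofReal (Real.exp (∑ i, f i z)) ∂ν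
      ≤ ∫⁻ z, 1 + ∑ i, ENNReal.ofReal (Real.exp (Fintype.card ι * f i z)) ∂ν := by
        refine lintegral_mono fun z => ?_
        rw [← ENNReal.ofReal_one, ← ENNReal.ofReal_sum_of_nonneg (fun i _ => (Real.exp_pos _).le),
          ← ENNReal.ofReal_add zero_le_one (by positivity)]
        exact ENNReal.ofReal_le_ofReal (Real.exp_sum_le_one_add_sum_exp_card_mul _)
    _ = 1 + ∑ i, ∫⁻ z, ENNReal.ofReal (Real.exp (Fintype.card ι * f i z)) ∂ν := by
        rw [lintegral_add_left measurable_const, lintegral_finsetSum _ fun i _ => by fun_prop,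
          lintegral_one, measure_univ]

lemma lintegral_abs_le_of_abs_le_exp {k : ℕ} {α C₀ c₀ : ℝ} {φ : (Fin k → ℝ) → ℝ}
    (hφ : ∀ x, |φ x| ≤ Real.exp (C₀ * ∑ i, |x i| ^ α + c₀)) (ν : Measure (Fin k → ℝ))
    [IsProbabilityMeasure ν] :
    ∫⁻ z, ENNReal.ofReal |φ z| ∂ν ≤ ENNReal.ofReal (Real.exp c₀) *
      (1 + ∑ i, ∫⁻ z, ENNReal.ofReal (Real.exp (k * C₀ * |z i| ^ α)) ∂ν) := by
  calc ∫⁻ z, ENNReal.ofReal |φ z| ∂ν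
      ≤ ∫⁻ z, ENNReal.ofReal (Real.exp c₀) *
          ENNReal.ofReal (Real.exp (∑ i, C₀ * |z i| ^ α)) ∂ν := lintegral_mono fun z => by
        rw [← ENNReal.ofReal_mul (Real.exp_nonneg _), ← Real.exp_add, add_comm, ← Finset.mul_sum]
        exact ENNReal.ofReal_le_ofReal (hφ z)
    _ = ENNReal.ofReal (Real.exp c₀) *
          ∫⁻ z, ENNReal.ofReal (Real.exp (∑ i, C₀ * |z i| ^ α)) ∂ν :=
        lintegral_const_mul' _ _ ENNReal.ofReal_ne_top
    _ ≤ _ := by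
        gcongr
        simpa [mul_assoc] using
          lintegral_exp_sum_le_one_add_sum ν (f := fun i z => C₀ * |z i| ^ α) fun i => by fun_prop

/-- Uniform Gaussian integrability of `α`-controlled functions for `1 ≤ α < 2`: there is a
constant `C > 0` with `E_{z∼N(μ,Σ)}|φ(z)| ≤ C exp(C‖μ‖₂^α) 𝖢_α^k(Cα‖Σ‖₂^{α/2})` for all
`μ` and PSD `Σ`, where `𝖢_α^k` is finite. -/
theorem alpha_controlled_gaussian_integral_bound
    {k : ℕ} (α : ℝ) (hα1 : 1 ≤ α) (hα2 : α < 2)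
    (φ : (Fin k → ℝ) → ℝ) (hφ : AlphaControlled α φ) :
    ∃ C : ℝ, 0 < C ∧
      ∀ (μmean : Fin k → ℝ) (S : Matrix (Fin k) (Fin k) ℝ), S.PosSemidef →
        ∀ ν : Measure (Fin k → ℝ), IsGaussianVec μmean S ν →
          (∫⁻ z, ENNReal.ofReal |φ z| ∂ν
            ≤ ENNReal.ofReal C * ENNReal.ofReal (Real.exp (C * euclNorm μmean ^ α))
              * gaussMGF k α (C * α * matSpectralNorm S ^ (α / 2))) ∧
          gaussMGF k α (C * α * matSpectralNorm S ^ (α / 2)) < ⊤ := by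
  obtain ⟨C₀, c₀, hC₀, -, hφ⟩ := hφ
  have hα0 : 0 ≤ α := zero_le_one.trans hα1
  set C := Real.exp c₀ * (k + 1) + 2 ^ (α - 1) * (k * C₀)
  have hC₁ : Real.exp c₀ * (k + 1) ≤ C := le_add_of_nonneg_right (by positivity)
  have hC₂ : 2 ^ (α - 1) * (k * C₀) ≤ C := le_add_of_nonneg_left (by positivity)
  have hC : 0 < C := by positivity
  refine ⟨C, hC, fun m S _ ν hν => ⟨?_, gaussMGF_lt_top k hα0 hα2 _⟩⟩
  have := hν.isProbabilityMeasure
  set E := ENNReal.ofReal (Real.exp (C * euclNorm m ^ α))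
  set G := gaussMGF k α (C * α * matSpectralNorm S ^ (α / 2))
  have hEG : 1 ≤ E * G := one_le_mul
    (ENNReal.one_le_ofReal.2 (Real.one_le_exp (by have := euclNorm_nonneg m; positivity)))
    (one_le_gaussMGF k α (by have := matSpectralNorm_nonneg S; positivity))
  have hcoord (i : Fin k) : ∫⁻ z, ENNReal.ofReal (Real.exp (k * C₀ * |z i| ^ α)) ∂ν ≤ E * G :=
    hν.lintegral_exp_mul_abs_rpow_le hα1 (by positivity) hC₂ (mul_le_mul_of_nonneg_right
      (le_mul_of_one_le_right hC.le hα1) (Real.rpow_nonneg (matSpectralNorm_nonneg S) _)) i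
  calc ∫⁻ z, ENNReal.ofReal |φ z| ∂ν ≤ ENNReal.ofReal (Real.exp c₀) * (1 + ∑ _i : Fin k, E * G) :=
        (lintegral_abs_le_of_abs_le_exp hφ ν).trans (by gcongr with i; exact hcoord i)
    _ ≤ ENNReal.ofReal (Real.exp c₀) * ((k + 1) * (E * G)) := by
        rw [Finset.sum_const, Finset.card_univ, Fintype.card_fin, nsmul_eq_mul, add_mul, one_mul,
          add_comm]
        gcongr
    _ ≤ ENNReal.ofReal C * E * G := by
        rw [← mul_assoc, mul_assoc (ENNReal.ofReal C)]
        gcongr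
        rw [← ENNReal.ofReal_natCast, ← ENNReal.ofReal_one, ← ENNReal.ofReal_add (by positivity)
          zero_le_one, ← ENNReal.ofReal_mul (Real.exp_nonneg _)]
        exact ENNReal.ofReal_le_ofReal hC₁
end

section
/- Suppose φ: ℝ → ℝ satisfies |φ(x)| ≤ C(1 + |x|^p) for all x and some C > 0, p ∈ ℕ. Then for y ∼ N(0,1), the map μ ↦ Var(φ(σy + μ)) is differentiable and |∂_μ Var(φ(σy + μ))| ≤ R·σ^{−1}·(1 + σ^{2p} + |μ|^{2p}) for a constant R depending only on p and C, uniformly in μ ∈ ℝ and σ > 0. -/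
/-!
Write `E_Ψ(m) = ∫ Ψ(σy + m) dγ(y) = ∫ Ψ(x) g_{m,σ²}(x) dx` with `g` the Gaussian density. The
mean enters only through `g`, whose `m`-derivative is `(x - m)/σ² · g_{m,σ²}(x)`; for
`|m - μ| ≤ 1` this is dominated by a multiple of `(|x - μ| + 1) g_{μ,2σ²}(x)`, so for every
polynomially bounded `Ψ` we may differentiate under the integral, getting
`E_Ψ'(μ) = σ⁻¹ ∫ y Ψ(σy + μ) dγ(y)`. Apply this to `φ` and `φ²` in `Var = E_{φ²} - E_φ²`, and bound
the resulting integrals with `1 + |σy + μ|^q ≤ 2^q (1 + |y|^q)(1 + σ^q + |μ|^q)` and the Gaussian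
moments of `y`.
-/

open MeasureTheory ProbabilityTheory Real
open scoped NNReal ENNReal

lemma memLp_abs_pow_gaussianReal (μ : ℝ) (v : ℝ≥0) (q : ℕ) (p : ℝ≥0) :
    MemLp (fun x : ℝ => |x| ^ q) p (gaussianReal μ v) := by
  rcases Nat.eq_zero_or_pos q with rfl | hq
  · simpa using memLp_const (1 : ℝ)
  have h := (memLp_id_gaussianReal (μ := μ) (v := v) (p * q)).norm_rpow_div q
  simp only [id, Real.norm_eq_abs, ENNReal.toReal_natCast, Real.rpow_natCast] at h
  rwa [ENNReal.coe_mul, ENNReal.coe_natCast,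
    ENNReal.mul_div_cancel_right (by exact_mod_cast hq.ne') (by simp)] at h

lemma memLp_gaussianReal_of_abs_le {μ : ℝ} {v : ℝ≥0} {Ψ : ℝ → ℝ} {D : ℝ} {q : ℕ}
    (hΨ : AEStronglyMeasurable Ψ (gaussianReal μ v)) (hb : ∀ x, |Ψ x| ≤ D * (1 + |x| ^ q))
    {p : ℝ≥0∞} (hp : p ≠ ∞) : MemLp Ψ p (gaussianReal μ v) := by
  lift p to ℝ≥0 using hp
  have h := ((memLp_const (1 : ℝ)).add (memLp_abs_pow_gaussianReal μ v q p)).const_mul D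
  refine h.mono' hΨ (ae_of_all _ fun x => ?_)
  simpa using hb x

lemma MeasureTheory.Integrable.gaussianPDFReal_mul {μ : ℝ} {v : ℝ≥0} {f : ℝ → ℝ}
    (hf : Integrable f (gaussianReal μ v)) :
    Integrable fun x => gaussianPDFReal μ v x * f x := by
  rcases eq_or_ne v 0 with rfl | hv
  · simp
  rw [gaussianReal_of_var_ne_zero _ hv, integrable_withDensity_iff_integrable_smul'
    (measurable_gaussianPDF μ v) (ae_of_all _ fun _ => gaussianPDF_lt_top)] at hf
  simpa [toReal_gaussianPDF] using hf

lemma hasDerivAt_gaussianPDFReal_mean (v : ℝ≥0) (x μ : ℝ) :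
    HasDerivAt (fun m => gaussianPDFReal m v x) ((x - μ) / v * gaussianPDFReal μ v x) μ := by
  have hexponent : HasDerivAt (fun m => -(x - m) ^ 2 / (2 * v)) ((x - μ) / v) μ := by
    refine ((((hasDerivAt_id μ).const_sub x).fun_pow 2).fun_neg.div_const
      (2 * (v : ℝ))).congr_deriv ?_
    simp only [id]
    ring
  refine (hexponent.exp.const_mul (√(2 * π * v))⁻¹).congr_deriv ?_
  rw [gaussianPDFReal]
  ring

lemma gaussianPDFReal_le_of_abs_sub_le {v : ℝ≥0} (hv : v ≠ 0) {m μ δ : ℝ} (h : |m - μ| ≤ δ)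
    (x : ℝ) :
    gaussianPDFReal m v x ≤ √2 * exp (δ ^ 2 / (2 * v)) * gaussianPDFReal μ (2 * v) x := by
  have hv' : (0 : ℝ) < v := by positivity
  have hsq : (x - μ) ^ 2 ≤ 2 * (x - m) ^ 2 + 2 * δ ^ 2 := by
    nlinarith [sq_nonneg (x - m - (m - μ)), sq_abs (m - μ), abs_nonneg (m - μ)]
  calc gaussianPDFReal m v x
      ≤ (√(2 * π * v))⁻¹ * exp (δ ^ 2 / (2 * v) + -(x - μ) ^ 2 / (2 * (2 * v))) := by
        rw [gaussianPDFReal]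
        gcongr
        rw [div_add_div _ _ (by positivity) (by positivity),
          div_le_div_iff₀ (by positivity) (by positivity)]
        nlinarith [mul_le_mul_of_nonneg_left hsq hv'.le]
    _ = √2 * exp (δ ^ 2 / (2 * v)) * gaussianPDFReal μ (2 * v) x := by
        rw [gaussianPDFReal, exp_add, NNReal.coe_mul, NNReal.coe_ofNat,
          show 2 * π * (2 * (v : ℝ)) = 2 * (2 * π * v) by ring, Real.sqrt_mul zero_le_two]
        field_simp

theorem hasDerivAt_integral_gaussianReal_mean {Ψ : ℝ → ℝ} {D : ℝ} {q : ℕ} (hΨ : Measurable Ψ)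
    (hb : ∀ x, |Ψ x| ≤ D * (1 + |x| ^ q)) {v : ℝ≥0} (hv : v ≠ 0) (μ : ℝ) :
    HasDerivAt (fun m => ∫ x, Ψ x ∂gaussianReal m v)
      (∫ x, (x - μ) / v * Ψ x ∂gaussianReal μ v) μ := by
  simp_rw [integral_gaussianReal_eq_integral_smul hv, smul_eq_mul]
  have hv' : (0 : ℝ) < v := by positivity
  set c := √2 * exp (1 ^ 2 / (2 * v)) / v
  have hΨL2 : ∀ w : ℝ≥0, MemLp Ψ 2 (gaussianReal μ w) := fun w =>
    memLp_gaussianReal_of_abs_le hΨ.aestronglyMeasurable hb ENNReal.ofNat_ne_top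
  have hweight : MemLp (fun x => |x - μ| + 1) 2 (gaussianReal μ (2 * v)) :=
    ((memLp_id_gaussianReal' 2 ENNReal.ofNat_ne_top).sub (memLp_const μ)).norm.add (memLp_const 1)
  have hdom_int : Integrable (fun x => (|x - μ| + 1) * |Ψ x|) (gaussianReal μ (2 * v)) :=
    hweight.integrable_mul (hΨL2 _).norm
  have hdom : ∀ x, ∀ m ∈ Metric.ball μ 1, ‖(x - m) / v * gaussianPDFReal m v x * Ψ x‖
      ≤ c * (gaussianPDFReal μ (2 * v) x * ((|x - μ| + 1) * |Ψ x|)) := by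
    intro x m hm
    have hmμ : |m - μ| ≤ 1 := by
      rw [Metric.mem_ball, Real.dist_eq] at hm
      exact hm.le
    have hxm : |x - m| ≤ |x - μ| + 1 := by linarith [abs_sub_le x μ m, abs_sub_comm μ m]
    have hpdf := gaussianPDFReal_le_of_abs_sub_le hv hmμ x
    rw [Real.norm_eq_abs, abs_mul, abs_mul, abs_div, abs_of_pos hv',
      abs_of_nonneg (gaussianPDFReal_nonneg _ _ _)]
    calc |x - m| / v * gaussianPDFReal m v x * |Ψ x|
        ≤ (|x - μ| + 1) / v * (√2 * exp (1 ^ 2 / (2 * v)) * gaussianPDFReal μ (2 * v) x)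
            * |Ψ x| := by gcongr; exact gaussianPDFReal_nonneg _ _ _
      _ = c * (gaussianPDFReal μ (2 * v) x * ((|x - μ| + 1) * |Ψ x|)) := by ring
  have key := hasDerivAt_integral_of_dominated_loc_of_deriv_le (Metric.ball_mem_nhds μ one_pos)
    (F := fun m x => gaussianPDFReal m v x * Ψ x)
    (F' := fun m x => (x - m) / v * gaussianPDFReal m v x * Ψ x)
    (Filter.Eventually.of_forall fun m => by fun_prop)
    ((hΨL2 v).integrable one_le_two).gaussianPDFReal_mul (by fun_prop) (ae_of_all _ hdom)
    (hdom_int.gaussianPDFReal_mul.const_mul c)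
    (ae_of_all _ fun x m _ => (hasDerivAt_gaussianPDFReal_mean v x m).mul_const (Ψ x))
  exact key.2.congr_deriv (integral_congr_ae (ae_of_all _ fun x => by ring))

lemma hasLaw_const_mul_add_gaussianReal (σ m : ℝ) :
    HasLaw (fun y => σ * y + m) (gaussianReal m (.mk (σ ^ 2) (sq_nonneg σ)))
      (gaussianReal 0 1) := by
  simpa using
    gaussianReal_add_const (gaussianReal_const_mul (HasLaw.id (μ := gaussianReal 0 1)) σ) m

lemma memLp_comp_const_mul_add {Ψ : ℝ → ℝ} {D : ℝ} {q : ℕ} (hΨ : Measurable Ψ)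
    (hb : ∀ x, |Ψ x| ≤ D * (1 + |x| ^ q)) (σ m : ℝ) {p : ℝ≥0∞} (hp : p ≠ ∞) :
    MemLp (fun y => Ψ (σ * y + m)) p (gaussianReal 0 1) := by
  have hlaw := hasLaw_const_mul_add_gaussianReal σ m
  have h : MemLp Ψ p (gaussianReal m (.mk (σ ^ 2) (sq_nonneg σ))) :=
    memLp_gaussianReal_of_abs_le hΨ.aestronglyMeasurable hb hp
  rw [← hlaw.map_eq] at h
  exact h.comp_of_map hlaw.aemeasurable

theorem hasDerivAt_integral_comp_const_mul_add {Ψ : ℝ → ℝ} {D : ℝ} {q : ℕ} (hΨ : Measurable Ψ)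
    (hb : ∀ x, |Ψ x| ≤ D * (1 + |x| ^ q)) {σ : ℝ} (hσ : σ ≠ 0) (μ : ℝ) :
    HasDerivAt (fun m => ∫ y, Ψ (σ * y + m) ∂gaussianReal 0 1)
      (σ⁻¹ * ∫ y, y * Ψ (σ * y + μ) ∂gaussianReal 0 1) μ := by
  have hv : (.mk (σ ^ 2) (sq_nonneg σ) : ℝ≥0) ≠ 0 := by
    rw [ne_eq, ← NNReal.coe_eq_zero, NNReal.coe_mk]
    positivity
  have hcomp : ∀ m {f : ℝ → ℝ}, Measurable f →
      ∫ y, f (σ * y + m) ∂gaussianReal 0 1 = ∫ x, f x ∂gaussianReal m (.mk (σ ^ 2) (sq_nonneg σ)) :=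
    fun m f hf => (hasLaw_const_mul_add_gaussianReal σ m).integral_comp hf.aestronglyMeasurable
  simp_rw [hcomp _ hΨ]
  refine (hasDerivAt_integral_gaussianReal_mean hΨ hb hv μ).congr_deriv ?_
  rw [← hcomp μ (by fun_prop), ← integral_const_mul]
  congr 1 with y
  rw [NNReal.coe_mk]
  field_simp
  ring

lemma abs_sq_le_of_abs_le_mul_one_add_pow {a x D : ℝ} {q : ℕ} (h : |a| ≤ D * (1 + |x| ^ q)) :
    |a ^ 2| ≤ 2 * D ^ 2 * (1 + |x| ^ (2 * q)) := by
  rw [abs_pow, pow_mul']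
  nlinarith [pow_le_pow_left₀ (abs_nonneg _) h 2, sq_nonneg (|x| ^ q - 1)]

theorem hasDerivAt_variance_comp_const_mul_add {Ψ : ℝ → ℝ} {D : ℝ} {q : ℕ} (hΨ : Measurable Ψ)
    (hb : ∀ x, |Ψ x| ≤ D * (1 + |x| ^ q)) {σ : ℝ} (hσ : σ ≠ 0) (μ : ℝ) :
    HasDerivAt (fun m => variance (fun y => Ψ (σ * y + m)) (gaussianReal 0 1))
      (σ⁻¹ * ((∫ y, y * Ψ (σ * y + μ) ^ 2 ∂gaussianReal 0 1)
        - 2 * (∫ y, Ψ (σ * y + μ) ∂gaussianReal 0 1) * ∫ y, y * Ψ (σ * y + μ) ∂gaussianReal 0 1))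
      μ := by
  have hvar : (fun m => variance (fun y => Ψ (σ * y + m)) (gaussianReal 0 1)) = fun m =>
      (∫ y, Ψ (σ * y + m) ^ 2 ∂gaussianReal 0 1) - (∫ y, Ψ (σ * y + m) ∂gaussianReal 0 1) ^ 2 :=
    funext fun m => variance_eq_sub (memLp_comp_const_mul_add hΨ hb σ m ENNReal.ofNat_ne_top)
  have hd1 := hasDerivAt_integral_comp_const_mul_add hΨ hb hσ μ
  have hd2 := hasDerivAt_integral_comp_const_mul_add (hΨ.pow_const 2)
    (fun x => abs_sq_le_of_abs_le_mul_one_add_pow (hb x)) hσ μ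
  rw [hvar]
  exact (hd2.fun_sub (hd1.fun_pow 2)).congr_deriv (by norm_num; ring)

lemma one_add_abs_mul_add_pow_le (σ y m : ℝ) (q : ℕ) :
    1 + |σ * y + m| ^ q ≤ 2 ^ q * (1 + |y| ^ q) * (1 + |σ| ^ q + |m| ^ q) := by
  have htri : |σ * y + m| ^ q ≤ 2 ^ q * (|σ| ^ q * |y| ^ q + |m| ^ q) :=
    calc |σ * y + m| ^ q ≤ (|σ| * |y| + |m|) ^ q := by
          gcongr
          exact (abs_add_le _ _).trans_eq (by rw [abs_mul])
      _ ≤ 2 ^ (q - 1) * ((|σ| * |y|) ^ q + |m| ^ q) := add_pow_le (by positivity) (by positivity) q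
      _ ≤ 2 ^ q * (|σ| ^ q * |y| ^ q + |m| ^ q) := by
          rw [mul_pow]
          gcongr
          · exact one_le_two
          · omega
  have h2q : (1 : ℝ) ≤ 2 ^ q := one_le_pow₀ one_le_two
  have hσ : 0 ≤ |σ| ^ q := by positivity
  have hy : 0 ≤ |y| ^ q := by positivity
  have hm : 0 ≤ |m| ^ q := by positivity
  nlinarith [mul_nonneg (mul_nonneg hy hσ) (sub_nonneg.2 h2q), mul_nonneg hy hm,
    mul_nonneg (sub_nonneg.2 h2q) (add_nonneg hσ hm), mul_nonneg hy (sub_nonneg.2 h2q)]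

lemma abs_integral_mul_comp_const_mul_add_le {ν : Measure ℝ} {w Ψ : ℝ → ℝ} {D : ℝ} {q : ℕ}
    (hb : ∀ x, |Ψ x| ≤ D * (1 + |x| ^ q)) (hw : ∀ y, |w y| ≤ 1 + |y|)
    (hint : Integrable (fun y => (1 + |y|) * (1 + |y| ^ q)) ν) (σ m : ℝ) :
    |∫ y, w y * Ψ (σ * y + m) ∂ν|
      ≤ 2 ^ q * (∫ y, (1 + |y|) * (1 + |y| ^ q) ∂ν) * D * (1 + |σ| ^ q + |m| ^ q) := by
  have hD : 0 ≤ D := nonneg_of_mul_nonneg_left ((abs_nonneg _).trans (hb 0)) (by positivity)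
  set S := 1 + |σ| ^ q + |m| ^ q
  have hpt : ∀ y, |w y * Ψ (σ * y + m)| ≤ 2 ^ q * D * S * ((1 + |y|) * (1 + |y| ^ q)) := by
    intro y
    rw [abs_mul]
    calc |w y| * |Ψ (σ * y + m)| ≤ (1 + |y|) * (D * (2 ^ q * (1 + |y| ^ q) * S)) := by
          gcongr
          · exact hw y
          · exact (hb _).trans (by gcongr; exact one_add_abs_mul_add_pow_le σ y m q)
      _ = 2 ^ q * D * S * ((1 + |y|) * (1 + |y| ^ q)) := by ring
  calc |∫ y, w y * Ψ (σ * y + m) ∂ν| ≤ ∫ y, |w y * Ψ (σ * y + m)| ∂ν := abs_integral_le_integral_abs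
    _ ≤ ∫ y, 2 ^ q * D * S * ((1 + |y|) * (1 + |y| ^ q)) ∂ν :=
        integral_mono_of_nonneg (ae_of_all _ fun _ => abs_nonneg _) (hint.const_mul _)
          (ae_of_all _ hpt)
    _ = 2 ^ q * (∫ y, (1 + |y|) * (1 + |y| ^ q) ∂ν) * D * S := by
        rw [integral_const_mul]
        ring

lemma integrable_one_add_abs_mul_one_add_abs_pow_gaussianReal (μ : ℝ) (v : ℝ≥0) (q : ℕ) :
    Integrable (fun y : ℝ => (1 + |y|) * (1 + |y| ^ q)) (gaussianReal μ v) := by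
  have h1 : MemLp (fun y : ℝ => 1 + |y|) 2 (gaussianReal μ v) :=
    memLp_gaussianReal_of_abs_le (D := 1) (q := 1) (by fun_prop)
      (fun y => by rw [abs_of_nonneg (by positivity)]; simp) ENNReal.ofNat_ne_top
  have h2 : MemLp (fun y : ℝ => 1 + |y| ^ q) 2 (gaussianReal μ v) :=
    memLp_gaussianReal_of_abs_le (D := 1) (q := q) (by fun_prop)
      (fun y => by rw [abs_of_nonneg (by positivity)]; simp) ENNReal.ofNat_ne_top
  exact h1.integrable_mul h2

lemma one_le_integral_one_add_abs_mul_one_add_abs_pow_gaussianReal (μ : ℝ) (v : ℝ≥0) (q : ℕ) :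
    1 ≤ ∫ y, (1 + |y|) * (1 + |y| ^ q) ∂gaussianReal μ v :=
  calc (1 : ℝ) = ∫ _, 1 ∂gaussianReal μ v := by simp
    _ ≤ ∫ y, (1 + |y|) * (1 + |y| ^ q) ∂gaussianReal μ v :=
        integral_mono (integrable_const 1)
          (integrable_one_add_abs_mul_one_add_abs_pow_gaussianReal μ v q) fun y =>
            one_le_mul_of_one_le_of_one_le (by simp) (by simp)

lemma sq_one_add_add_le (a b : ℝ) : (1 + a + b) ^ 2 ≤ 3 * (1 + a ^ 2 + b ^ 2) := by
  nlinarith [sq_nonneg (a - b), sq_nonneg (a - 1), sq_nonneg (b - 1)]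

lemma abs_inv_mul_sub_two_mul_mul_le {σ a e b K L S T : ℝ} (hσ : 0 < σ) (ha : |a| ≤ L * T)
    (he : |e| ≤ K * S) (hb : |b| ≤ K * S) (hST : S ^ 2 ≤ 3 * T) :
    |σ⁻¹ * (a - 2 * e * b)| ≤ (L + 6 * K ^ 2) * σ⁻¹ * T := by
  have heb : |e| * |b| ≤ K ^ 2 * (3 * T) :=
    calc |e| * |b| ≤ (K * S) * (K * S) := mul_le_mul he hb (abs_nonneg _) ((abs_nonneg _).trans he)
      _ = K ^ 2 * S ^ 2 := by ring
      _ ≤ K ^ 2 * (3 * T) := by gcongr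
  calc |σ⁻¹ * (a - 2 * e * b)| = σ⁻¹ * |a - 2 * e * b| := by
        rw [abs_mul, abs_inv, abs_of_pos hσ]
    _ ≤ σ⁻¹ * (|a| + 2 * (|e| * |b|)) := by
        gcongr
        refine (abs_sub _ _).trans_eq ?_
        rw [abs_mul, abs_mul, abs_two, mul_assoc]
    _ ≤ σ⁻¹ * (L * T + 2 * (K ^ 2 * (3 * T))) := by gcongr
    _ = (L + 6 * K ^ 2) * σ⁻¹ * T := by ring

/-- For polynomially bounded `φ` (`|φ(x)| ≤ C(1+|x|^p)`) and `y ∼ N(0,1)`, the map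
`μ ↦ Var φ(σ y + μ)` is differentiable, with derivative bounded by
`R σ⁻¹ (1 + σ^{2p} + |μ|^{2p})` for a constant `R = R(p, C)` independent of `μ, σ, φ`. -/
theorem deriv_variance_of_polynomially_bounded
    (C : ℝ) (hC : 0 < C) (p : ℕ) :
    ∃ R : ℝ, 0 < R ∧
      ∀ φ : ℝ → ℝ, Measurable φ → (∀ x, |φ x| ≤ C * (1 + |x| ^ p)) →
        ∀ σ : ℝ, 0 < σ → ∀ μ : ℝ,
          ∃ d : ℝ,
            HasDerivAt
              (fun m : ℝ => variance (fun y : ℝ => φ (σ * y + m)) (gaussianReal 0 1)) d μ ∧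
            |d| ≤ R * σ⁻¹ * (1 + σ ^ (2 * p) + |μ| ^ (2 * p)) := by
  set M : ℕ → ℝ := fun q => ∫ y, (1 + |y|) * (1 + |y| ^ q) ∂gaussianReal 0 1
  have hM : ∀ q, 1 ≤ M q := one_le_integral_one_add_abs_mul_one_add_abs_pow_gaussianReal 0 1
  refine ⟨2 ^ (2 * p) * M (2 * p) * (2 * C ^ 2) + 6 * (2 ^ p * M p * C) ^ 2,
    by have := hM (2 * p); positivity, fun φ hφ hb σ hσ μ =>
      ⟨_, hasDerivAt_variance_comp_const_mul_add hφ hb hσ.ne' μ, ?_⟩⟩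
  have hint := integrable_one_add_abs_mul_one_add_abs_pow_gaussianReal 0 1
  have hE := abs_integral_mul_comp_const_mul_add_le (w := 1) hb (fun y => by simp) (hint p) σ μ
  have hA1 := abs_integral_mul_comp_const_mul_add_le (w := id) hb (fun y => by simp) (hint p) σ μ
  have hA2 := abs_integral_mul_comp_const_mul_add_le (w := id)
    (fun x => abs_sq_le_of_abs_le_mul_one_add_pow (hb x)) (fun y => by simp) (hint (2 * p)) σ μ
  simp only [Pi.one_apply, one_mul, id, abs_of_pos hσ] at hE hA1 hA2
  have hST := sq_one_add_add_le (σ ^ p) (|μ| ^ p)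
  rw [← pow_mul', ← pow_mul'] at hST
  exact abs_inv_mul_sub_two_mul_mul_le hσ hA2 hE hA1 hST
end

section
/- Define coefficients b_r^j by the recursion b₀⁰ = 1; b_r^j = 0 for r ∉ [0, j]; b_j^j = 1; and for 0 ≤ r < j, b_r^j = ∑_{i=r}^{j−2} b_r^i · b_{i+1}^{j−1}. Then the unique solution is b_r^j = C_{(j−r)/2} if j − r is even (where C_m is the m-th Catalan number) and b_r^j = 0 if j − r is odd. -/
/-!
The coefficient `b_r^j` only depends on `n = j - r`, through the `n`-th moment `μ n` of the
semicircle law (`C_{n/2}` for even `n`, `0` for odd `n`). For `j = r + n + 2` the recursion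
becomes the convolution identity `μ (n + 2) = ∑_{t ≤ n} μ t μ (n - t)`, which for odd `n` holds
because every term has a factor of odd order and for `n = 2m` is Segner's recurrence
`C_{m+1} = ∑_{k ≤ m} C_k C_{m-k}`. Uniqueness is strong induction on `j`: the recursion expresses
`b_r^j` through coefficients with upper index `< j`.
-/

/-- `b j r` stands for the coefficient `b_r^j`. -/
def SatisfiesCatalanRec (b : ℕ → ℕ → ℝ) : Prop :=
  b 0 0 = 1 ∧
  (∀ j r : ℕ, j < r → b j r = 0) ∧
  (∀ j : ℕ, b j j = 1) ∧
  (∀ j r : ℕ, r < j →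
    b j r = ∑ i ∈ Finset.Icc r (j - 2), b i r * b (j - 1) (i + 1))

noncomputable def catalanCoeff (j r : ℕ) : ℝ :=
  if r ≤ j ∧ Even (j - r) then (catalan ((j - r) / 2) : ℝ) else 0

open Finset

theorem Finset.sum_range_two_mul_add_one_of_odd_eq_zero {M : Type*} [AddCommMonoid M]
    (f : ℕ → M) (hf : ∀ k, f (2 * k + 1) = 0) (m : ℕ) :
    ∑ t ∈ range (2 * m + 1), f t = ∑ k ∈ range (m + 1), f (2 * k) := by
  induction m with
  | zero => simp
  | succ m ih =>
    rw [show 2 * (m + 1) + 1 = 2 * m + 1 + 1 + 1 by ring, sum_range_succ, sum_range_succ, ih,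
      hf, add_zero, sum_range_succ (n := m + 1), mul_add_one]

noncomputable def semicircleMoment (n : ℕ) : ℝ :=
  if Even n then (catalan (n / 2) : ℝ) else 0

theorem semicircleMoment_two_mul (k : ℕ) : semicircleMoment (2 * k) = catalan k := by
  simp [semicircleMoment]

theorem semicircleMoment_of_odd {n : ℕ} (hn : Odd n) : semicircleMoment n = 0 := by
  simp [semicircleMoment, Nat.not_even_iff_odd.mpr hn]

theorem semicircleMoment_add_two (n : ℕ) :
    semicircleMoment (n + 2) =
      ∑ t ∈ range (n + 1), semicircleMoment t * semicircleMoment (n - t) := by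
  obtain ⟨m, rfl | rfl⟩ := Nat.even_or_odd' n
  · have hodd : ∀ k, semicircleMoment (2 * k + 1) * semicircleMoment (2 * m - (2 * k + 1)) = 0 :=
      fun k => by rw [semicircleMoment_of_odd (odd_two_mul_add_one k), zero_mul]
    rw [sum_range_two_mul_add_one_of_odd_eq_zero _ hodd, show 2 * m + 2 = 2 * (m + 1) by ring,
      semicircleMoment_two_mul, catalan_succ,
      Fin.sum_univ_eq_sum_range (fun k => catalan k * catalan (m - k))]
    push_cast
    refine sum_congr rfl fun k _ => ?_
    rw [← Nat.mul_sub, semicircleMoment_two_mul, semicircleMoment_two_mul]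
  · rw [semicircleMoment_of_odd ⟨m + 1, by ring⟩]
    refine (sum_eq_zero fun t ht => ?_).symm
    obtain ht_even | ht_odd := Nat.even_or_odd t
    · have hle : t ≤ 2 * m + 1 := Nat.lt_succ_iff.mp (mem_range.mp ht)
      rw [semicircleMoment_of_odd (Nat.Odd.sub_even hle (odd_two_mul_add_one m) ht_even), mul_zero]
    · rw [semicircleMoment_of_odd ht_odd, zero_mul]

theorem catalanCoeff_add_left (r n : ℕ) : catalanCoeff (r + n) r = semicircleMoment n := by
  simp [catalanCoeff, semicircleMoment]

theorem catalanCoeff_of_lt {j r : ℕ} (h : j < r) : catalanCoeff j r = 0 :=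
  if_neg fun hr => h.not_ge hr.1

theorem satisfiesCatalanRec_catalanCoeff : SatisfiesCatalanRec catalanCoeff := by
  refine ⟨by simp [catalanCoeff], fun j r => catalanCoeff_of_lt, fun j => ?_, fun j r h => ?_⟩
  · simpa [semicircleMoment] using catalanCoeff_add_left j 0
  obtain ⟨n, rfl⟩ | rfl : (∃ n, j = r + n + 2) ∨ j = r + 1 := by
    rcases Nat.exists_eq_add_of_lt h with ⟨_ | n, rfl⟩
    · exact .inr rfl
    · exact .inl ⟨n, by ring⟩
  · rw [show r + n + 2 - 2 = r + n by omega, show r + n + 2 - 1 = r + n + 1 by omega,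
      ← Ico_add_one_right_eq_Icc, sum_Ico_eq_sum_range, show r + n + 1 - r = n + 1 by omega,
      add_assoc, catalanCoeff_add_left, semicircleMoment_add_two]
    refine sum_congr rfl fun t ht => ?_
    have hle : t ≤ n := Nat.lt_succ_iff.mp (mem_range.mp ht)
    rw [catalanCoeff_add_left, show r + n + 1 = r + t + 1 + (n - t) by omega, catalanCoeff_add_left]
  · rw [add_tsub_cancel_right, catalanCoeff_add_left, semicircleMoment_of_odd odd_one]
    refine (sum_eq_zero fun i hi => ?_).symm
    rw [catalanCoeff_of_lt (Nat.lt_succ_of_le (mem_Icc.mp hi).1), mul_zero]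

theorem SatisfiesCatalanRec.eq {b b' : ℕ → ℕ → ℝ} (hb : SatisfiesCatalanRec b)
    (hb' : SatisfiesCatalanRec b') : b = b' := by
  obtain ⟨-, hb_lt, hb_diag, hb_rec⟩ := hb
  obtain ⟨-, hb'_lt, hb'_diag, hb'_rec⟩ := hb'
  funext j
  induction j using Nat.strong_induction_on with
  | _ j ih =>
    funext r
    rcases lt_trichotomy j r with h | rfl | h
    · rw [hb_lt j r h, hb'_lt j r h]
    · rw [hb_diag, hb'_diag]
    · rw [hb_rec j r h, hb'_rec j r h]
      refine sum_congr rfl fun i hi => ?_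
      have hi := mem_Icc.mp hi
      rw [ih i (by omega), ih (j - 1) (by omega)]

/-- The recursion `b₀⁰ = 1`, `b_j^j = 1`, `b_r^j = ∑_{i=r}^{j−2} b_r^i b_{i+1}^{j−1}`
(and `0` outside `[0,j]`) has the Catalan numbers as its unique solution:
`b_r^j = C_{(j−r)/2}` if `j − r` is even, and `0` if `j − r` is odd. -/
theorem catalan_recursion_unique_solution :
    SatisfiesCatalanRec catalanCoeff ∧
    ∀ b : ℕ → ℕ → ℝ, SatisfiesCatalanRec b → ∀ j r : ℕ, b j r = catalanCoeff j r :=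
  ⟨satisfiesCatalanRec_catalanCoeff, fun _ hb j r =>
    congrFun₂ (hb.eq satisfiesCatalanRec_catalanCoeff) j r⟩
end
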